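/- arXiv:2206.11124 — 8 statements merged into one kernel-verified Lean document; each statement's English description precedes it below -/
import Mathlib

section
/- Let N ≥ 2, 1 ≤ b ≤ N, and let ψ : Fin N → ℝ^d be a family of vectors. Set H = (1/N)·Σ_{i} ψ_i ψ_iᵀ, and for a b-element subset B of Fin N set H(B) = (1/b)·Σ_{i∈B} ψ_i ψ_iᵀ. Let (Δw, v) be a square-integrable random vector in ℝ^d × ℝ^d and let B be a uniformly distributed random b-element subset of Fin N, independent of (Δw, v). Given α, β ∈ ℝ, define Δw' = (I − αH(B))Δw + βv and v' = −αH(B)Δw + βv, and the second moments C = E[Δw Δwᵀ], J = E[Δw vᵀ], V = E[v vᵀ], and likewise C', J', V' for (Δw', v'). Then the block matrix [[C', J'], [J'ᵀ, V']] equals A·[[C, J], [Jᵀ, V]]·Aᵀ + γα²·[[Σ(C), Σ(C)], [Σ(C), Σ(C)]], where A is the block matrix [[I − αH, βI], [−αH, βI]], γ = (N − b)/((N − 1)·b), and Σ(C) = (1/N)·Σ_i (ψ_iᵀ C ψ_i)·ψ_i ψ_iᵀ − H C H. -/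
/-!
Stack the state as `z = (Δw, v)`. For a fixed batch `B` the step is linear, `z' = A(B) z`, so its
second moment is `A(B) E[z zᵀ] A(B)ᵀ`, and the batch enters only through the sample mean `H(B)` of
the rank-one matrices `ψᵢ ψᵢᵀ`. Writing `A(B) = A + (A(B) - A)`, where `A(B) - A` is linear in
`H(B) - H` and averages to zero over all batches, the cross terms drop out and what remains besides
`A E[z zᵀ] Aᵀ` is `α²` times the covariance of `H(B)`, seen through `X ↦ X C Xᵀ`. For a sample of
size `b` drawn without replacement from `N` items, a batch contains a given index with probability
`b / N` and a given pair of distinct indices with probability `b (b - 1) / (N (N - 1))`; this makes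
the covariance of the sample mean `(N - b) / ((N - 1) b)` times the population covariance, which
for `X ↦ X C Xᵀ` is `Σ(C)`, because `ψψᵀ C ψψᵀ = (ψᵀ C ψ) ψψᵀ`.
-/

open MeasureTheory Matrix Finset

theorem LinearMap.sum_add_add_of_sum_eq_zero {κ R M P : Type*} [CommSemiring R]
    [AddCommMonoid M] [Module R M] [AddCommMonoid P] [Module R P]
    (F : M →ₗ[R] M →ₗ[R] P) (s : Finset κ) (a : M) {e : κ → M} (he : ∑ k ∈ s, e k = 0) :
    ∑ k ∈ s, F (a + e k) (a + e k) = #s • F a a + ∑ k ∈ s, F (e k) (e k) := by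
  have hleft : ∑ k ∈ s, F (e k) a = 0 := by rw [← LinearMap.sum_apply, ← map_sum, he]; simp
  have hright : ∑ k ∈ s, F a (e k) = 0 := by rw [← map_sum, he, map_zero]
  simp only [map_add, LinearMap.add_apply, sum_add_distrib, hleft, hright, sum_const]
  abel

namespace Matrix

variable {R : Type*} [CommSemiring R] {l m n o : Type*}

def mulMulTransposeBilin [Fintype m] (M : Matrix m m R) :
    Matrix n m R →ₗ[R] Matrix n m R →ₗ[R] Matrix n n R :=
  LinearMap.mk₂ R (fun X Y => X * M * Yᵀ) (fun _ _ _ => by simp only [Matrix.add_mul])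
    (fun _ _ _ => by simp) (fun _ _ _ => by simp only [transpose_add, Matrix.mul_add])
    (fun _ _ _ => by simp)

@[simp]
theorem mulMulTransposeBilin_apply [Fintype m] (M : Matrix m m R) (X Y : Matrix n m R) :
    mulMulTransposeBilin M X Y = X * M * Yᵀ := rfl

theorem fromBlocks_sum {κ : Type*} (s : Finset κ) (A : κ → Matrix n l R) (B : κ → Matrix n m R)
    (C : κ → Matrix o l R) (D : κ → Matrix o m R) :
    ∑ k ∈ s, fromBlocks (A k) (B k) (C k) (D k)
      = fromBlocks (∑ k ∈ s, A k) (∑ k ∈ s, B k) (∑ k ∈ s, C k) (∑ k ∈ s, D k) := by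
  induction s using Finset.cons_induction with
  | empty => simp
  | cons k s hk ih => simp [sum_cons, ih, fromBlocks_add]

theorem fromBlocks_zero_mul_mul_transpose [Fintype m] [Fintype n] (X : Matrix m n R)
    (C : Matrix n n R) (J : Matrix n m R) (K : Matrix m n R) (V : Matrix m m R) :
    fromBlocks X (0 : Matrix m m R) X 0 * fromBlocks C J K V
        * (fromBlocks X (0 : Matrix m m R) X 0)ᵀ
      = fromBlocks (X * C * Xᵀ) (X * C * Xᵀ) (X * C * Xᵀ) (X * C * Xᵀ) := by
  simp [fromBlocks_transpose, fromBlocks_multiply]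

theorem vecMulVec_self_mul_mul_transpose [Fintype n] (a : n → R) (C : Matrix n n R) :
    vecMulVec a a * C * (vecMulVec a a)ᵀ = (a ⬝ᵥ C *ᵥ a) • vecMulVec a a := by
  rw [transpose_vecMulVec, vecMulVec_mul, vecMulVec_mul_vecMulVec, ← dotProduct_mulVec]
  ext i j
  simp [vecMulVec_apply, mul_left_comm]

end Matrix

section Momentum

variable {R : Type*} [CommRing R] {n : Type*} [DecidableEq n]

def momentumMatrix (α β : R) (K : Matrix n n R) : Matrix (n ⊕ n) (n ⊕ n) R :=
  fromBlocks (1 - α • K) (β • 1) (-(α • K)) (β • 1)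

theorem momentumMatrix_eq_add (α β : R) (K K' : Matrix n n R) :
    momentumMatrix α β K'
      = momentumMatrix α β K + (-α) • fromBlocks (K' - K) 0 (K' - K) 0 := by
  rw [momentumMatrix, momentumMatrix, fromBlocks_smul, fromBlocks_add]
  congr 1 <;> module

theorem momentumMatrix_mulVec [Fintype n] (α β : R) (K : Matrix n n R) (u v : n → R) :
    momentumMatrix α β K *ᵥ Sum.elim u v
      = Sum.elim ((1 - α • K) *ᵥ u + β • v) (-((α • K) *ᵥ u) + β • v) := by
  simp [momentumMatrix, fromBlocks_mulVec, smul_mulVec, neg_mulVec]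

end Momentum

section Sampling

variable {ι M P : Type*} [AddCommGroup M] [Module ℝ M] [AddCommGroup P] [Module ℝ P]

noncomputable def sampleMean (x : ι → M) (s : Finset ι) : M := (#s : ℝ)⁻¹ • ∑ i ∈ s, x i

variable [Fintype ι]

theorem sampleMean_univ (x : ι → M) :
    sampleMean x univ = (Fintype.card ι : ℝ)⁻¹ • ∑ i, x i := by
  rw [sampleMean, card_univ]

noncomputable def populationVariance (F : M →ₗ[ℝ] M →ₗ[ℝ] P) (x : ι → M) : P :=
  sampleMean (fun i => F (x i) (x i)) univ - F (sampleMean x univ) (sampleMean x univ)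

theorem populationVariance_mulMulTransposeBilin_vecMulVec {n : Type*} [Fintype n]
    (ψ : ι → n → ℝ) (C : Matrix n n ℝ) :
    populationVariance (mulMulTransposeBilin C) (fun i => vecMulVec (ψ i) (ψ i))
      = (Fintype.card ι : ℝ)⁻¹ • ∑ i, (ψ i ⬝ᵥ C *ᵥ ψ i) • vecMulVec (ψ i) (ψ i)
        - sampleMean (fun i => vecMulVec (ψ i) (ψ i)) univ * C
          * sampleMean (fun i => vecMulVec (ψ i) (ψ i)) univ := by
  have hsymm : (sampleMean (fun i => vecMulVec (ψ i) (ψ i)) univ)ᵀ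
      = sampleMean (fun i => vecMulVec (ψ i) (ψ i)) univ := by
    simp only [sampleMean, transpose_smul, transpose_sum, transpose_vecMulVec]
  simp only [populationVariance, mulMulTransposeBilin_apply, vecMulVec_self_mul_mul_transpose,
    hsymm]
  rw [sampleMean_univ fun i => (ψ i ⬝ᵥ C *ᵥ ψ i) • vecMulVec (ψ i) (ψ i)]

variable [DecidableEq ι]

theorem cast_card_filter_mem_powersetCard_univ {b : ℕ} (hb : 1 ≤ b) (i : ι) :
    (#{B ∈ powersetCard b univ | i ∈ B} : ℝ)
      = (Fintype.card ι).choose b * b / Fintype.card ι := by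
  have : Nonempty ι := ⟨i⟩
  have hn : (Fintype.card ι : ℝ) ≠ 0 := Nat.cast_ne_zero.2 Fintype.card_ne_zero
  have hcount := card_filter_powersetCard_subset {i} univ b (subset_univ _) (by simpa using hb)
  simp only [singleton_subset_iff, card_singleton, card_univ] at hcount
  have hchoose := Nat.choose_mul (n := Fintype.card ι) (s := 1) hb
  rw [Nat.choose_one_right, Nat.choose_one_right] at hchoose
  rw [eq_div_iff hn, hcount]
  exact_mod_cast (mul_comm _ _).trans hchoose.symm

theorem cast_card_filter_mem_mem_powersetCard_univ (b : ℕ) {i j : ι} (hij : i ≠ j) :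
    (#{B ∈ powersetCard b univ | i ∈ B ∧ j ∈ B} : ℝ)
      = (Fintype.card ι).choose b * (b * (b - 1)) / (Fintype.card ι * (Fintype.card ι - 1)) := by
  set n := Fintype.card ι
  have hn : 2 ≤ n := by simpa [card_pair hij] using card_le_univ {i, j}
  have hn' : (2 : ℝ) ≤ n := by exact_mod_cast hn
  rw [eq_div_iff (by nlinarith)]
  rcases lt_or_ge b 2 with hb | hb
  · have hempty : #{B ∈ powersetCard b univ | i ∈ B ∧ j ∈ B} = 0 := by
      rw [card_eq_zero, filter_eq_empty_iff]
      rintro B hB ⟨hi, hj⟩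
      have := one_lt_card.2 ⟨i, hi, j, hj, hij⟩
      rw [mem_powersetCard_univ] at hB
      omega
    interval_cases b <;> simp [hempty]
  · have hcount := card_filter_powersetCard_subset {i, j} univ b (subset_univ _)
      (by rw [card_pair hij]; exact hb)
    simp only [insert_subset_iff, singleton_subset_iff, card_pair hij, card_univ] at hcount
    -- `b * C(n, b) = n * C(n - 1, b - 1)`, applied twice
    have h₁ := Nat.choose_mul (n := n) (s := 1) (by omega : 1 ≤ b)
    have h₂ := Nat.choose_mul (n := n - 1) (s := 1) (by omega : 1 ≤ b - 1)
    simp only [Nat.choose_one_right, Nat.sub_sub] at h₁ h₂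
    have hnat : (n - 2).choose (b - 2) * (n * (n - 1)) = n.choose b * (b * (b - 1)) := by
      calc (n - 2).choose (b - 2) * (n * (n - 1))
          = n * ((n - 1) * (n - 2).choose (b - 2)) := by ring
        _ = n.choose b * (b * (b - 1)) := by rw [← h₂, ← mul_assoc, ← h₁, mul_assoc]
    have hreal := congrArg (Nat.cast (R := ℝ)) hnat
    push_cast [Nat.cast_sub (by omega : 1 ≤ n), Nat.cast_sub (by omega : 1 ≤ b)] at hreal
    rw [hcount, hreal]

theorem sum_sum_mem_eq_sum_card_filter_mem_smul {A : Type*} [AddCommMonoid A]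
    (𝒮 : Finset (Finset ι)) (f : ι → A) :
    ∑ B ∈ 𝒮, ∑ i ∈ B, f i = ∑ i, #{B ∈ 𝒮 | i ∈ B} • f i := by
  rw [sum_comm' (t' := univ) (s' := fun i => {B ∈ 𝒮 | i ∈ B}) (by simp [and_comm])]
  simp only [sum_const]

theorem sum_sum_mem_sum_mem_eq_sum_sum_card_filter_smul {A : Type*} [AddCommMonoid A]
    (𝒮 : Finset (Finset ι)) (g : ι → ι → A) :
    ∑ B ∈ 𝒮, ∑ i ∈ B, ∑ j ∈ B, g i j = ∑ i, ∑ j, #{B ∈ 𝒮 | i ∈ B ∧ j ∈ B} • g i j := by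
  simp_rw [← sum_product' (f := g)]
  rw [sum_comm' (t' := univ) (s' := fun p => {B ∈ 𝒮 | p.1 ∈ B ∧ p.2 ∈ B}) (by simp [and_comm]),
    ← univ_product_univ, sum_product]
  simp only [sum_const]

theorem sum_powersetCard_sum_mem {b : ℕ} (hb : 1 ≤ b) (f : ι → M) :
    ∑ B ∈ powersetCard b univ, ∑ i ∈ B, f i
      = ((Fintype.card ι).choose b * b / Fintype.card ι : ℝ) • ∑ i, f i := by
  rw [sum_sum_mem_eq_sum_card_filter_mem_smul, smul_sum]
  refine sum_congr rfl fun i _ => ?_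
  rw [← Nat.cast_smul_eq_nsmul ℝ, cast_card_filter_mem_powersetCard_univ hb]

theorem sum_powersetCard_sum_mem_sum_mem {b : ℕ} (hb : 1 ≤ b) (g : ι → ι → M) :
    ∑ B ∈ powersetCard b univ, ∑ i ∈ B, ∑ j ∈ B, g i j
      = ((Fintype.card ι).choose b * b / Fintype.card ι : ℝ) • ∑ i, g i i
        + ((Fintype.card ι).choose b * (b * (b - 1)) /
            (Fintype.card ι * (Fintype.card ι - 1)) : ℝ) • (∑ i, ∑ j, g i j - ∑ i, g i i) := by
  rw [sum_sum_mem_sum_mem_eq_sum_sum_card_filter_smul, ← sum_sub_distrib, smul_sum, smul_sum,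
    ← sum_add_distrib]
  refine sum_congr rfl fun i _ => ?_
  rw [← add_sum_erase _ _ (mem_univ i), ← Nat.cast_smul_eq_nsmul ℝ]
  simp only [and_self]
  rw [cast_card_filter_mem_powersetCard_univ hb, ← sum_erase_eq_sub (mem_univ i), smul_sum]
  congr 1
  refine sum_congr rfl fun j hj => ?_
  rw [← Nat.cast_smul_eq_nsmul ℝ,
    cast_card_filter_mem_mem_powersetCard_univ b (ne_of_mem_erase hj).symm]

theorem sum_powersetCard_sampleMean {b : ℕ} (hb : 1 ≤ b) (x : ι → M) :
    ∑ B ∈ powersetCard b univ, sampleMean x B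
      = ((Fintype.card ι).choose b : ℝ) • sampleMean x univ := by
  have hb' : (b : ℝ) ≠ 0 := Nat.cast_ne_zero.2 (by omega)
  calc ∑ B ∈ powersetCard b univ, sampleMean x B
      = (b : ℝ)⁻¹ • ∑ B ∈ powersetCard b univ, ∑ i ∈ B, x i := by
        rw [smul_sum]
        refine sum_congr rfl fun B hB => ?_
        rw [sampleMean, mem_powersetCard_univ.1 hB]
    _ = _ := by
        rw [sum_powersetCard_sum_mem hb, sampleMean_univ, smul_smul, smul_smul]
        congr 1
        field_simp

theorem sum_powersetCard_apply_sampleMean_sub (F : M →ₗ[ℝ] M →ₗ[ℝ] P) {b : ℕ} (hb : 1 ≤ b)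
    (hn : 2 ≤ Fintype.card ι) (x : ι → M) :
    ∑ B ∈ powersetCard b univ,
        F (sampleMean x B - sampleMean x univ) (sampleMean x B - sampleMean x univ)
      = ((Fintype.card ι).choose b * ((Fintype.card ι - b) / ((Fintype.card ι - 1) * b)) : ℝ) •
          populationVariance F x := by
  have hb' : (b : ℝ) ≠ 0 := Nat.cast_ne_zero.2 (by omega)
  have hn' : (2 : ℝ) ≤ Fintype.card ι := by exact_mod_cast hn
  have hn0 : (Fintype.card ι : ℝ) ≠ 0 := by positivity
  have hn1 : (Fintype.card ι : ℝ) - 1 ≠ 0 := by linarith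
  have hsq : ∑ B ∈ powersetCard b univ, F (sampleMean x B) (sampleMean x B)
      = ((b : ℝ)⁻¹ * (b : ℝ)⁻¹) • ∑ B ∈ powersetCard b univ, ∑ i ∈ B, ∑ j ∈ B, F (x i) (x j) := by
    rw [smul_sum]
    refine sum_congr rfl fun B hB => ?_
    simp only [sampleMean, mem_powersetCard_univ.1 hB, map_smul, LinearMap.smul_apply, map_sum,
      LinearMap.sum_apply, smul_sum, smul_smul]
    exact sum_comm
  have hleft : ∑ B ∈ powersetCard b univ, F (sampleMean x B) (sampleMean x univ)
      = ((Fintype.card ι).choose b : ℝ) • F (sampleMean x univ) (sampleMean x univ) := by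
    rw [← LinearMap.sum_apply, ← map_sum, sum_powersetCard_sampleMean hb, map_smul,
      LinearMap.smul_apply]
  have hright : ∑ B ∈ powersetCard b univ, F (sampleMean x univ) (sampleMean x B)
      = ((Fintype.card ι).choose b : ℝ) • F (sampleMean x univ) (sampleMean x univ) := by
    rw [← map_sum, sum_powersetCard_sampleMean hb, map_smul]
  have hall : ∑ i, ∑ j, F (x i) (x j)
      = ((Fintype.card ι : ℝ) * Fintype.card ι) • F (sampleMean x univ) (sampleMean x univ) := by
    have hsum : ∑ i, x i = (Fintype.card ι : ℝ) • sampleMean x univ := by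
      rw [sampleMean_univ, smul_smul, mul_inv_cancel₀ hn0, one_smul]
    calc ∑ i, ∑ j, F (x i) (x j) = F (∑ i, x i) (∑ j, x j) := by
          simp only [map_sum, LinearMap.sum_apply]
          exact sum_comm
      _ = _ := by rw [hsum, map_smul, map_smul, LinearMap.smul_apply, smul_smul]
  simp only [map_sub, LinearMap.sub_apply, sum_sub_distrib, hsq, hleft, hright, sum_const,
    card_powersetCard, card_univ]
  rw [sum_powersetCard_sum_mem_sum_mem hb, hall, populationVariance,
    sampleMean_univ (fun i => F (x i) (x i))]
  match_scalars <;> field_simp <;> ring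

theorem sum_powersetCard_momentumMatrix_mul_mul_transpose {m : Type*} [Fintype m]
    [DecidableEq m] {b : ℕ} (hb : 1 ≤ b) (hn : 2 ≤ Fintype.card ι) (x : ι → Matrix m m ℝ)
    (α β : ℝ) (C J K V : Matrix m m ℝ) :
    ∑ B ∈ powersetCard b univ, momentumMatrix α β (sampleMean x B) * fromBlocks C J K V
        * (momentumMatrix α β (sampleMean x B))ᵀ
      = ((Fintype.card ι).choose b : ℝ) • (momentumMatrix α β (sampleMean x univ)
          * fromBlocks C J K V * (momentumMatrix α β (sampleMean x univ))ᵀ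
        + ((Fintype.card ι - b) / ((Fintype.card ι - 1) * b) * α ^ 2) •
          fromBlocks (populationVariance (mulMulTransposeBilin C) x)
            (populationVariance (mulMulTransposeBilin C) x)
            (populationVariance (mulMulTransposeBilin C) x)
            (populationVariance (mulMulTransposeBilin C) x)) := by
  set xm := sampleMean x univ
  set e : Finset ι → Matrix (m ⊕ m) (m ⊕ m) ℝ :=
    fun B => (-α) • fromBlocks (sampleMean x B - xm) 0 (sampleMean x B - xm) 0
  have hmean : ∑ B ∈ powersetCard b univ, e B = 0 := by
    rw [← smul_sum, fromBlocks_sum, sum_sub_distrib, sum_powersetCard_sampleMean hb, sum_const,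
      card_powersetCard, card_univ, ← Nat.cast_smul_eq_nsmul ℝ, sub_self]
    simp
  have hnoise : ∀ B, mulMulTransposeBilin (fromBlocks C J K V) (e B) (e B)
      = α ^ 2 • fromBlocks (mulMulTransposeBilin C (sampleMean x B - xm) (sampleMean x B - xm))
          (mulMulTransposeBilin C (sampleMean x B - xm) (sampleMean x B - xm))
          (mulMulTransposeBilin C (sampleMean x B - xm) (sampleMean x B - xm))
          (mulMulTransposeBilin C (sampleMean x B - xm) (sampleMean x B - xm)) := by
    intro B
    simp only [e, map_smul, LinearMap.smul_apply, smul_smul, ← sq, neg_sq,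
      mulMulTransposeBilin_apply, fromBlocks_zero_mul_mul_transpose]
  calc ∑ B ∈ powersetCard b univ, momentumMatrix α β (sampleMean x B) * fromBlocks C J K V
        * (momentumMatrix α β (sampleMean x B))ᵀ
      = ∑ B ∈ powersetCard b univ, mulMulTransposeBilin (fromBlocks C J K V)
          (momentumMatrix α β xm + e B) (momentumMatrix α β xm + e B) := by
        refine sum_congr rfl fun B _ => ?_
        rw [momentumMatrix_eq_add α β xm (sampleMean x B)]
        rfl
    _ = _ := by
        rw [LinearMap.sum_add_add_of_sum_eq_zero _ _ _ hmean]
        simp only [hnoise]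
        rw [← smul_sum, fromBlocks_sum, sum_powersetCard_apply_sampleMean_sub _ hb hn,
          card_powersetCard, card_univ, ← Nat.cast_smul_eq_nsmul ℝ]
        simp only [fromBlocks_smul, smul_add, smul_smul, mulMulTransposeBilin_apply]
        congr 2 <;> ring_nf

end Sampling

section SecondMoment

variable {Ω ι κ : Type*} [MeasurableSpace Ω] (μ : Measure Ω)

noncomputable def secondMoment (f : Ω → ι → ℝ) (g : Ω → κ → ℝ) : Matrix ι κ ℝ :=
  of fun i j => ∫ ω, f ω i * g ω j ∂μ

theorem secondMoment_transpose (f : Ω → ι → ℝ) (g : Ω → κ → ℝ) :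
    (secondMoment μ f g)ᵀ = secondMoment μ g f := by
  ext i j
  simp only [secondMoment, transpose_apply, of_apply, mul_comm]

theorem secondMoment_sumElim (f g : Ω → ι → ℝ) :
    secondMoment μ (fun ω => Sum.elim (f ω) (g ω)) (fun ω => Sum.elim (f ω) (g ω))
      = fromBlocks (secondMoment μ f f) (secondMoment μ f g)
          (secondMoment μ g f) (secondMoment μ g g) := by
  ext (i | i) (j | j) <;> rfl

theorem secondMoment_mulVec {ι' κ' : Type*} [Fintype ι] [Fintype κ] {f : Ω → ι → ℝ}
    {g : Ω → κ → ℝ} (hfg : ∀ i j, Integrable (fun ω => f ω i * g ω j) μ)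
    (P : Matrix ι' ι ℝ) (Q : Matrix κ' κ ℝ) :
    secondMoment μ (fun ω => P *ᵥ f ω) (fun ω => Q *ᵥ g ω) = P * secondMoment μ f g * Qᵀ := by
  ext a c
  have hexpand : ∀ ω, (P *ᵥ f ω) a * (Q *ᵥ g ω) c
      = ∑ i, ∑ j, P a i * Q c j * (f ω i * g ω j) := by
    intro ω
    simp only [mulVec, dotProduct, sum_mul_sum]
    exact sum_congr rfl fun i _ => sum_congr rfl fun j _ => by ring
  simp only [secondMoment, of_apply, hexpand, mul_apply, transpose_apply]
  rw [integral_finsetSum _ fun i _ => integrable_finsetSum _ fun j _ => (hfg i j).const_mul _]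
  simp only [integral_finsetSum _ fun j _ => (hfg _ j).const_mul _, integral_const_mul, sum_mul]
  rw [sum_comm]
  exact sum_congr rfl fun i _ => sum_congr rfl fun j _ => by ring

theorem secondMoment_momentumMatrix_mulVec {n : Type*} [Fintype n] [DecidableEq n]
    {w v : Ω → n → ℝ} (hw : ∀ i, MemLp (fun ω => w ω i) 2 μ)
    (hv : ∀ i, MemLp (fun ω => v ω i) 2 μ) (α β : ℝ) (K : Matrix n n ℝ) :
    secondMoment μ (fun ω => momentumMatrix α β K *ᵥ Sum.elim (w ω) (v ω))
        (fun ω => momentumMatrix α β K *ᵥ Sum.elim (w ω) (v ω))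
      = momentumMatrix α β K * fromBlocks (secondMoment μ w w) (secondMoment μ w v)
          (secondMoment μ w v)ᵀ (secondMoment μ v v) * (momentumMatrix α β K)ᵀ := by
  have hL2 : ∀ i, MemLp (fun ω => Sum.elim (w ω) (v ω) i) 2 μ := by
    rintro (i | i)
    exacts [hw i, hv i]
  rw [secondMoment_mulVec μ fun i j => (hL2 i).integrable_mul (hL2 j), secondMoment_sumElim,
    secondMoment_transpose]

end SecondMoment

theorem sgd_second_moment_update_general
    {Ω : Type*} [MeasurableSpace Ω] (μ : Measure Ω)
    (N d b : ℕ) (hN : 2 ≤ N) (hb1 : 1 ≤ b) (hbN : b ≤ N)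
    (ψ : Fin N → Fin d → ℝ)
    (w v : Ω → Fin d → ℝ)
    (hw : ∀ i, MemLp (fun ω => w ω i) 2 μ)
    (hv : ∀ i, MemLp (fun ω => v ω i) 2 μ)
    (α β : ℝ)
    -- the full Hessian and the batch Hessians
    (H : Matrix (Fin d) (Fin d) ℝ)
    (hH : H = (N : ℝ)⁻¹ • ∑ i : Fin N, vecMulVec (ψ i) (ψ i))
    (HB : Finset (Fin N) → Matrix (Fin d) (Fin d) ℝ)
    (hHB : ∀ B, HB B = (b : ℝ)⁻¹ • ∑ i ∈ B, vecMulVec (ψ i) (ψ i))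
    -- the updated parameter deviation and momentum, as functions of the batch
    (w' v' : Finset (Fin N) → Ω → Fin d → ℝ)
    (hw' : ∀ B ω, w' B ω = (1 - α • HB B).mulVec (w ω) + β • v ω)
    (hv' : ∀ B ω, v' B ω = -((α • HB B).mulVec (w ω)) + β • v ω)
    -- second moments before the step
    (C J V : Matrix (Fin d) (Fin d) ℝ)
    (hC : C = of fun i j => ∫ ω, w ω i * w ω j ∂μ)
    (hJ : J = of fun i j => ∫ ω, w ω i * v ω j ∂μ)
    (hV : V = of fun i j => ∫ ω, v ω i * v ω j ∂μ)
    -- the family of all b-element batches; expectation over B is the uniform average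
    (𝒮 : Finset (Finset (Fin N)))
    (h𝒮 : 𝒮 = Finset.univ.powersetCard b)
    -- second moments after the step
    (C' J' V' : Matrix (Fin d) (Fin d) ℝ)
    (hC' : C' = of fun i j => (𝒮.card : ℝ)⁻¹ * ∑ B ∈ 𝒮, ∫ ω, w' B ω i * w' B ω j ∂μ)
    (hJ' : J' = of fun i j => (𝒮.card : ℝ)⁻¹ * ∑ B ∈ 𝒮, ∫ ω, w' B ω i * v' B ω j ∂μ)
    (hV' : V' = of fun i j => (𝒮.card : ℝ)⁻¹ * ∑ B ∈ 𝒮, ∫ ω, v' B ω i * v' B ω j ∂μ)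
    -- noise amplitude and noise covariance
    (γ : ℝ) (hγ : γ = ((N : ℝ) - b) / (((N : ℝ) - 1) * b))
    (Snoise : Matrix (Fin d) (Fin d) ℝ)
    (hSnoise : Snoise = (N : ℝ)⁻¹ •
        ∑ i : Fin N, (ψ i ⬝ᵥ C.mulVec (ψ i)) • vecMulVec (ψ i) (ψ i) - H * C * H)
    -- the deterministic one-step evolution matrix
    (A : Matrix (Fin d ⊕ Fin d) (Fin d ⊕ Fin d) ℝ)
    (hA : A = fromBlocks (1 - α • H) (β • 1) (-(α • H)) (β • 1)) :
    fromBlocks C' J' J'ᵀ V'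
      = A * fromBlocks C J Jᵀ V * Aᵀ + (γ * α ^ 2) • fromBlocks Snoise Snoise Snoise Snoise := by
  set x : Fin N → Matrix (Fin d) (Fin d) ℝ := fun i => vecMulVec (ψ i) (ψ i)
  have hH_mean : H = sampleMean x univ := by rw [hH, sampleMean_univ, Fintype.card_fin]
  have hHB_mean : ∀ B ∈ 𝒮, HB B = sampleMean x B := fun B hB => by
    rw [hHB, sampleMean, mem_powersetCard_univ.1 (h𝒮 ▸ hB)]
  have hpost : fromBlocks C' J' J'ᵀ V' = (#𝒮 : ℝ)⁻¹ • ∑ B ∈ 𝒮,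
      secondMoment μ (fun ω => momentumMatrix α β (HB B) *ᵥ Sum.elim (w ω) (v ω))
        (fun ω => momentumMatrix α β (HB B) *ᵥ Sum.elim (w ω) (v ω)) := by
    rw [hC', hJ', hV']
    ext (i | i) (j | j) <;>
      simp [secondMoment, Matrix.sum_apply, momentumMatrix_mulVec, ← hw', ← hv', mul_comm]
  have hchoose : (N.choose b : ℝ) ≠ 0 := Nat.cast_ne_zero.2 (Nat.choose_pos hbN).ne'
  calc fromBlocks C' J' J'ᵀ V'
      = (#𝒮 : ℝ)⁻¹ • ∑ B ∈ 𝒮, momentumMatrix α β (sampleMean x B) * fromBlocks C J Jᵀ V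
          * (momentumMatrix α β (sampleMean x B))ᵀ := by
        rw [hpost]
        refine congrArg _ (sum_congr rfl fun B hB => ?_)
        rw [secondMoment_momentumMatrix_mulVec μ hw hv, hHB_mean B hB, hC, hJ, hV]
        rfl
    _ = momentumMatrix α β H * fromBlocks C J Jᵀ V * (momentumMatrix α β H)ᵀ
          + (γ * α ^ 2) • fromBlocks Snoise Snoise Snoise Snoise := by
        rw [h𝒮, sum_powersetCard_momentumMatrix_mul_mul_transpose hb1 (by simpa using hN),
          card_powersetCard, card_univ, Fintype.card_fin, smul_smul, inv_mul_cancel₀ hchoose,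
          one_smul, populationVariance_mulMulTransposeBilin_vecMulVec, Fintype.card_fin, hγ,
          hSnoise, hH_mean]
    _ = _ := by rw [hA, momentumMatrix]

/-- One step of mini-batch SGD with momentum on a quadratic problem: evolution of
the second moments `C = E[Δw Δwᵀ]`, `J = E[Δw vᵀ]`, `V = E[v vᵀ]`. The batch `B`
is uniformly distributed over all `b`-element subsets of `Fin N`, independently of
`(Δw, v)`; this is modeled by averaging over all such subsets. -/
theorem sgd_second_moment_update
    {Ω : Type*} [MeasurableSpace Ω] (μ : Measure Ω) [IsProbabilityMeasure μ]
    (N d b : ℕ) (hN : 2 ≤ N) (hb1 : 1 ≤ b) (hbN : b ≤ N)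
    (ψ : Fin N → Fin d → ℝ)
    (w v : Ω → Fin d → ℝ)
    (hw : ∀ i, MemLp (fun ω => w ω i) 2 μ)
    (hv : ∀ i, MemLp (fun ω => v ω i) 2 μ)
    (α β : ℝ)
    -- the full Hessian and the batch Hessians
    (H : Matrix (Fin d) (Fin d) ℝ)
    (hH : H = (N : ℝ)⁻¹ • ∑ i : Fin N, vecMulVec (ψ i) (ψ i))
    (HB : Finset (Fin N) → Matrix (Fin d) (Fin d) ℝ)
    (hHB : ∀ B, HB B = (b : ℝ)⁻¹ • ∑ i ∈ B, vecMulVec (ψ i) (ψ i))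
    -- the updated parameter deviation and momentum, as functions of the batch
    (w' v' : Finset (Fin N) → Ω → Fin d → ℝ)
    (hw' : ∀ B ω, w' B ω = (1 - α • HB B).mulVec (w ω) + β • v ω)
    (hv' : ∀ B ω, v' B ω = -((α • HB B).mulVec (w ω)) + β • v ω)
    -- second moments before the step
    (C J V : Matrix (Fin d) (Fin d) ℝ)
    (hC : C = of fun i j => ∫ ω, w ω i * w ω j ∂μ)
    (hJ : J = of fun i j => ∫ ω, w ω i * v ω j ∂μ)
    (hV : V = of fun i j => ∫ ω, v ω i * v ω j ∂μ)
    -- the family of all b-element batches; expectation over B is the uniform average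
    (𝒮 : Finset (Finset (Fin N)))
    (h𝒮 : 𝒮 = Finset.univ.powersetCard b)
    -- second moments after the step
    (C' J' V' : Matrix (Fin d) (Fin d) ℝ)
    (hC' : C' = of fun i j => (𝒮.card : ℝ)⁻¹ * ∑ B ∈ 𝒮, ∫ ω, w' B ω i * w' B ω j ∂μ)
    (hJ' : J' = of fun i j => (𝒮.card : ℝ)⁻¹ * ∑ B ∈ 𝒮, ∫ ω, w' B ω i * v' B ω j ∂μ)
    (hV' : V' = of fun i j => (𝒮.card : ℝ)⁻¹ * ∑ B ∈ 𝒮, ∫ ω, v' B ω i * v' B ω j ∂μ)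
    -- noise amplitude and noise covariance
    (γ : ℝ) (hγ : γ = ((N : ℝ) - b) / (((N : ℝ) - 1) * b))
    (Snoise : Matrix (Fin d) (Fin d) ℝ)
    (hSnoise : Snoise = (N : ℝ)⁻¹ •
        ∑ i : Fin N, (ψ i ⬝ᵥ C.mulVec (ψ i)) • vecMulVec (ψ i) (ψ i) - H * C * H)
    -- the deterministic one-step evolution matrix
    (A : Matrix (Fin d ⊕ Fin d) (Fin d ⊕ Fin d) ℝ)
    (hA : A = fromBlocks (1 - α • H) (β • 1) (-(α • H)) (β • 1)) :
    fromBlocks C' J' J'ᵀ V'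
      = A * fromBlocks C J Jᵀ V * Aᵀ + (γ * α ^ 2) • fromBlocks Snoise Snoise Snoise Snoise :=
  sgd_second_moment_update_general μ N d b hN hb1 hbN ψ w v hw hv α β H hH HB hHB w' v' hw' hv' C J
    V hC hJ hV 𝒮 h𝒮 C' J' V' hC' hJ' hV' γ hγ Snoise hSnoise A hA
end

section
/- Let N ≥ 1, let H be an N × N real symmetric positive definite matrix with orthonormal eigenbasis u_1, …, u_N and eigenvalues λ_1, …, λ_N > 0, and let C be an N × N real symmetric positive semidefinite matrix. Then for every N × N real matrix Ψ with (1/N)·Ψ Ψᵀ = H and every index k, the matrix Σ(C) = (1/N)·Σ_{i=1}^N (Ψ_iᵀ C Ψ_i)·Ψ_i Ψ_iᵀ − H C H (where Ψ_i denotes the i-th column of Ψ) satisfies u_kᵀ · Σ(C) · u_k ≤ (N − 1)·λ_k·Tr(H C). -/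
/-!
Put `a = Ψᵀ u_k` and let `G = Ψᵀ C Ψ` be the (positive semidefinite) Gram matrix of the columns
of `Ψ` under `C`. Then `λ_k = |a|² / N`, `Tr(HC) = Tr G / N` and
`u_kᵀ Σ(C) u_k = (N ∑ᵢ aᵢ² Gᵢᵢ - aᵀ G a) / N²`, so the bound reduces to
`N ∑ᵢ aᵢ² Gᵢᵢ - aᵀ G a ≤ (N - 1) |a|² Tr G` for a positive semidefinite `G`. Written as a double
sum, the diagonal terms cancel, and each off-diagonal pair `(i, j)` contributes
`(N - 2)(aᵢ² Gⱼⱼ + aⱼ² Gᵢᵢ)` plus the quadratic form of `G` at `aⱼ eᵢ + aᵢ eⱼ`, both nonnegative.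
-/

open Matrix

namespace Matrix

variable {ι : Type*} [Fintype ι]

lemma PosSemidef.quadForm_pair_nonneg {G : Matrix ι ι ℝ} (hG : G.PosSemidef) (i j : ι) (x y : ℝ) :
    0 ≤ x ^ 2 * G i i + y ^ 2 * G j j + 2 * (x * y * G i j) := by
  classical
  have hsymm : G j i = G i j := by simpa using hG.isHermitian.apply i j
  have := hG.dotProduct_mulVec_nonneg (Pi.single i x + Pi.single j y)
  simp [mulVec_add, add_dotProduct, dotProduct_add, hsymm] at this
  linarith

lemma PosSemidef.card_mul_sum_sq_mul_diag_sub_le {G : Matrix ι ι ℝ} (hG : G.PosSemidef)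
    (a : ι → ℝ) :
    Fintype.card ι * ∑ i, a i ^ 2 * G i i - a ⬝ᵥ G *ᵥ a
      ≤ (Fintype.card ι - 1) * (a ⬝ᵥ a) * G.trace := by
  classical
  set n : ℝ := (Fintype.card ι : ℝ) with hn_def
  set S : ι → ι → ℝ := fun i j =>
    (n - 1) * (a i ^ 2 * G j j + a j ^ 2 * G i i) + 2 * (a i * a j * G i j) with hS
  have hoff : ∀ i j, i ≠ j → 0 ≤ S i j := by
    intro i j hij
    have hn : (2 : ℝ) ≤ n := by
      have : 2 ≤ Fintype.card ι := Fintype.one_lt_card_iff.2 ⟨i, j, hij⟩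
      rw [hn_def]; exact_mod_cast this
    have hdiag : 0 ≤ a i ^ 2 * G j j + a j ^ 2 * G i i := by
      have := hG.diag_nonneg (i := i)
      have := hG.diag_nonneg (i := j)
      positivity
    nlinarith [hG.quadForm_pair_nonneg i j (a j) (a i)]
  have hsum : ∑ i, ∑ j, S i j = 2 * ((n - 1) * (a ⬝ᵥ a) * G.trace + a ⬝ᵥ G *ᵥ a) := by
    have hcross : ∑ i, ∑ j, a i * a j * G i j = a ⬝ᵥ G *ᵥ a := by
      simp only [dotProduct, mulVec, Finset.mul_sum]
      exact Fintype.sum_congr _ _ fun i => Fintype.sum_congr _ _ fun j => by ring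
    simp only [hS, Finset.sum_add_distrib, ← Finset.mul_sum, hcross]
    rw [Finset.sum_comm (f := fun i j => a j ^ 2 * G i i)]
    simp only [← Finset.mul_sum, ← Finset.sum_mul, trace, diag, dotProduct, sq]
    ring
  have hsum_diag : ∑ i, S i i = 2 * (n * ∑ i, a i ^ 2 * G i i) := by
    simp only [hS, Finset.mul_sum]
    exact Finset.sum_congr rfl fun i _ => by ring
  have hsplit : ∑ i, ∑ j, S i j = ∑ i, S i i + ∑ i, ∑ j ∈ Finset.univ.erase i, S i j := by
    rw [← Finset.sum_add_distrib]
    exact Finset.sum_congr rfl fun i _ => (Finset.add_sum_erase _ _ (Finset.mem_univ i)).symm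
  have hsum_off : 0 ≤ ∑ i, ∑ j ∈ Finset.univ.erase i, S i j :=
    Finset.sum_nonneg fun i _ =>
      Finset.sum_nonneg fun j hj => hoff i j (Finset.ne_of_mem_erase hj).symm
  linarith

section CommSemiring

variable {R κ : Type*} [CommSemiring R]

lemma dotProduct_sum_smul_vecMulVec_self_mulVec [Fintype κ] (w : κ → R) (v : κ → ι → R)
    (u : ι → R) :
    u ⬝ᵥ (∑ i, w i • vecMulVec (v i) (v i)) *ᵥ u = ∑ i, (v i ⬝ᵥ u) ^ 2 * w i := by
  simp [sum_mulVec, smul_mulVec, vecMulVec_mulVec, dotProduct_sum, sq, dotProduct_comm u (v _),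
    mul_comm]

lemma transpose_mul_mul_apply (A : Matrix ι κ R) (C : Matrix ι ι R) (i j : κ) :
    (Aᵀ * C * A) i j = (fun k => A k i) ⬝ᵥ C *ᵥ fun k => A k j := by
  rw [mul_apply', dotProduct_mulVec]
  rfl

lemma dotProduct_mul_mul_transpose_mulVec [Fintype κ] (A : Matrix ι κ R) (B : Matrix κ κ R)
    (u : ι → R) :
    u ⬝ᵥ (A * B * Aᵀ) *ᵥ u = (Aᵀ *ᵥ u) ⬝ᵥ B *ᵥ (Aᵀ *ᵥ u) := by
  rw [← mulVec_mulVec, ← mulVec_mulVec, dotProduct_mulVec, mulVec_transpose]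

end CommSemiring

end Matrix

theorem sigma_kk_upper_bound_general
    (N : ℕ)
    (H C : Matrix (Fin N) (Fin N) ℝ)
    (hC : C.PosSemidef)
    (u : Fin N → Fin N → ℝ) (lam : Fin N → ℝ)
    (horth : ∀ k l, u k ⬝ᵥ u l = if k = l then 1 else 0)
    (heig : ∀ k, H.mulVec (u k) = lam k • u k)
    (k : Fin N)
    (Ψ : Matrix (Fin N) (Fin N) ℝ)
    (hΨ : (N : ℝ)⁻¹ • (Ψ * Ψᵀ) = H)
    (Snoise : Matrix (Fin N) (Fin N) ℝ)
    (hSnoise : Snoise = (N : ℝ)⁻¹ • ∑ i : Fin N,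
        ((fun j => Ψ j i) ⬝ᵥ C.mulVec fun j => Ψ j i) •
          vecMulVec (fun j => Ψ j i) (fun j => Ψ j i)
        - H * C * H) :
    u k ⬝ᵥ Snoise.mulVec (u k) ≤ ((N : ℝ) - 1) * lam k * (H * C).trace := by
  have hN : (N : ℝ) ≠ 0 := Nat.cast_ne_zero.2 k.pos.ne'
  set a := Ψᵀ *ᵥ u k
  set G := Ψᵀ * C * Ψ
  have hG : G.PosSemidef := by
    simpa [conjTranspose_eq_transpose_of_trivial] using hC.conjTranspose_mul_mul_same Ψ
  have hnorm : a ⬝ᵥ a = N * lam k := by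
    have hPP : Ψ * Ψᵀ = (N : ℝ) • H := by rw [← hΨ, smul_smul, mul_inv_cancel₀ hN, one_smul]
    have := dotProduct_mul_mul_transpose_mulVec Ψ 1 (u k)
    rw [Matrix.mul_one, one_mulVec, hPP, smul_mulVec, heig, dotProduct_smul, dotProduct_smul,
      horth, if_pos rfl] at this
    simpa using this.symm
  have htrace : (H * C).trace = (N : ℝ)⁻¹ * G.trace := by
    rw [← hΨ, smul_mul, trace_smul, smul_eq_mul, ← trace_mul_cycle]
  have hnoise : u k ⬝ᵥ Snoise *ᵥ u k
      = (N : ℝ)⁻¹ * ∑ i, a i ^ 2 * G i i - (N : ℝ)⁻¹ ^ 2 * (a ⬝ᵥ G *ᵥ a) := by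
    have hHCH : H * C * H = (N : ℝ)⁻¹ ^ 2 • (Ψ * G * Ψᵀ) := by
      simp only [← hΨ, G, Matrix.smul_mul, Matrix.mul_smul, smul_smul, Matrix.mul_assoc, sq]
    rw [hSnoise, sub_mulVec, dotProduct_sub, smul_mulVec, dotProduct_smul, smul_eq_mul,
      dotProduct_sum_smul_vecMulVec_self_mulVec, hHCH, smul_mulVec, dotProduct_smul, smul_eq_mul,
      dotProduct_mul_mul_transpose_mulVec]
    simp only [G, transpose_mul_mul_apply]
    rfl
  have hcore := hG.card_mul_sum_sq_mul_diag_sub_le a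
  rw [Fintype.card_fin, hnorm] at hcore
  rw [hnoise, htrace]
  calc (N : ℝ)⁻¹ * ∑ i, a i ^ 2 * G i i - (N : ℝ)⁻¹ ^ 2 * (a ⬝ᵥ G *ᵥ a)
      = (N : ℝ)⁻¹ ^ 2 * (N * ∑ i, a i ^ 2 * G i i - a ⬝ᵥ G *ᵥ a) := by field_simp
    _ ≤ (N : ℝ)⁻¹ ^ 2 * ((N - 1) * (N * lam k) * G.trace) := by gcongr
    _ = (N - 1) * lam k * ((N : ℝ)⁻¹ * G.trace) := by field_simp

/-- Upper bound on the spectral components of the mini-batch SGD gradient-noise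
covariance: if `H` is symmetric positive definite with orthonormal eigenbasis
`u_k`, eigenvalues `λ_k > 0`, `C` is symmetric PSD, and `(1/N)·ΨΨᵀ = H`, then for
`Σ(C) = (1/N)·Σ_i (Ψ_iᵀ C Ψ_i)·Ψ_i Ψ_iᵀ − HCH` one has
`u_kᵀ Σ(C) u_k ≤ (N−1)·λ_k·Tr(HC)`. -/
theorem sigma_kk_upper_bound
    (N : ℕ) (hN : 1 ≤ N)
    (H C : Matrix (Fin N) (Fin N) ℝ)
    (hHsymm : H.IsSymm) (hC : C.PosSemidef)
    (u : Fin N → Fin N → ℝ) (lam : Fin N → ℝ)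
    (horth : ∀ k l, u k ⬝ᵥ u l = if k = l then 1 else 0)
    (heig : ∀ k, H.mulVec (u k) = lam k • u k)
    (hpos : ∀ k, 0 < lam k)
    (k : Fin N)
    (Ψ : Matrix (Fin N) (Fin N) ℝ)
    (hΨ : (N : ℝ)⁻¹ • (Ψ * Ψᵀ) = H)
    (Snoise : Matrix (Fin N) (Fin N) ℝ)
    (hSnoise : Snoise = (N : ℝ)⁻¹ • ∑ i : Fin N,
        ((fun j => Ψ j i) ⬝ᵥ C.mulVec fun j => Ψ j i) •
          vecMulVec (fun j => Ψ j i) (fun j => Ψ j i)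
        - H * C * H) :
    u k ⬝ᵥ Snoise.mulVec (u k) ≤ ((N : ℝ) - 1) * lam k * (H * C).trace :=
  sigma_kk_upper_bound_general N H C hC u lam horth heig k Ψ hΨ Snoise hSnoise
end

section
/- Let N ≥ 1, let H be an N × N real symmetric positive definite matrix with orthonormal eigenbasis u_1, …, u_N and eigenvalues λ_1, …, λ_N > 0, and let C be an N × N real symmetric positive semidefinite matrix. Fix an index k and set C_kk = u_kᵀ C u_k, A = λ_k·(Tr(H C) − λ_k·C_kk) and B = (N − 1)·λ_k²·C_kk. Then for every real number s lying between A and B (i.e. min(A,B) ≤ s ≤ max(A,B)) there exists an N × N real matrix Ψ such that (1/N)·Ψ Ψᵀ = H and u_kᵀ · Σ(C) · u_k = s, where Σ(C) = (1/N)·Σ_{i=1}^N (Ψ_iᵀ C Ψ_i)·Ψ_i Ψ_iᵀ − H C H and Ψ_i denotes the i-th column of Ψ. -/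
open Matrix

/-- The mini-batch SGD gradient-noise covariance associated to a Jacobian `Ψ`,
Hessian `H` and second-moment matrix `C`:
`Σ(C) = (1/N)·Σ_i (Ψ_iᵀ C Ψ_i)·Ψ_i Ψ_iᵀ − HCH`, where `Ψ_i` is the `i`-th column. -/
noncomputable def noiseCov (N : ℕ) (H C Ψ : Matrix (Fin N) (Fin N) ℝ) :
    Matrix (Fin N) (Fin N) ℝ :=
  (N : ℝ)⁻¹ • ∑ i : Fin N,
      ((fun j => Ψ j i) ⬝ᵥ C.mulVec fun j => Ψ j i) •
        vecMulVec (fun j => Ψ j i) (fun j => Ψ j i)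
    - H * C * H

/-!
Write `H = U Λ Uᵀ`. For every orthogonal `R`, the Jacobian `Ψ = U (NΛ)^{1/2} R` satisfies
`ΨΨᵀ = N H`, and `u_k ⬝ ψ_i = √(Nλ_k) R_ki`, so that
`Σ_kk = λ_k Σ_i R_ki² (ψ_iᵀ C ψ_i) - λ_k² C_kk`.
If the `k`-th row of `R` is `-e_k`, only `ψ_k = -√(Nλ_k) u_k` contributes and `Σ_kk = B`;
if all its entries are `±1/√N`, the sum is `Tr(ΨᵀCΨ)/N = Tr(HC)` and `Σ_kk = A`.
The Householder reflections `R(w) = I - 2wwᵀ/|w|²` with `w = e_k` and `w = e_k + 𝟙/√N` realise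
the two cases. Both lie in the convex half-space `w_k > 0`, on which `Σ_kk` is continuous in `w`,
so the intermediate value theorem yields every value between `A` and `B`.
-/

namespace Matrix

section Householder

variable {n : Type*} [Fintype n] [DecidableEq n]

noncomputable def householder (w : n → ℝ) : Matrix n n ℝ :=
  1 - (2 / (w ⬝ᵥ w)) • vecMulVec w w

theorem householder_transpose (w : n → ℝ) : (householder w)ᵀ = householder w := by
  simp [householder, transpose_vecMulVec]

theorem householder_apply_eq_mulVec_single (w : n → ℝ) (k i : n) :
    householder w k i = (householder w *ᵥ Pi.single k 1) i := by
  conv_lhs => rw [← householder_transpose]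
  rw [mulVec_single_one]
  rfl

theorem householder_mulVec (w x : n → ℝ) :
    householder w *ᵥ x = x - (2 * (w ⬝ᵥ x) / (w ⬝ᵥ w)) • w := by
  ext i
  simp [householder, sub_mulVec, smul_mulVec, vecMulVec_mulVec]
  ring

theorem householder_mulVec_self {w : n → ℝ} (hw : w ≠ 0) : householder w *ᵥ w = -w := by
  have hww : w ⬝ᵥ w ≠ 0 := fun h => hw (dotProduct_self_eq_zero.mp h)
  rw [householder_mulVec, mul_div_assoc, div_self hww, mul_one, two_smul, sub_add_cancel_left]

theorem householder_sub_mulVec {x y : n → ℝ} (hxy : x ≠ y) (hn : x ⬝ᵥ x = y ⬝ᵥ y) :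
    householder (x - y) *ᵥ x = y := by
  have hw : (x - y) ⬝ᵥ (x - y) ≠ 0 := fun h => hxy (sub_eq_zero.mp (dotProduct_self_eq_zero.mp h))
  have hcoef : 2 * ((x - y) ⬝ᵥ x) / ((x - y) ⬝ᵥ (x - y)) = 1 := by
    rw [div_eq_one_iff_eq hw]
    simp only [sub_dotProduct, dotProduct_sub, dotProduct_comm y x] at hw ⊢
    linarith
  rw [householder_mulVec, hcoef, one_smul, sub_sub_cancel]

theorem householder_mul_transpose {w : n → ℝ} (hw : w ≠ 0) :
    householder w * (householder w)ᵀ = 1 := by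
  have hww : w ⬝ᵥ w ≠ 0 := fun h => hw (dotProduct_self_eq_zero.mp h)
  refine ext_of_mulVec_single fun j => ?_
  rw [householder_transpose, ← mulVec_mulVec, householder_mulVec, householder_mulVec, one_mulVec]
  ext i
  simp only [dotProduct_sub, dotProduct_smul, smul_eq_mul, Pi.sub_apply, Pi.smul_apply]
  field_simp
  ring

theorem continuousOn_householder : ContinuousOn (householder (n := n)) {w | w ≠ 0} := by
  unfold householder
  fun_prop (disch := intro w hw; exact fun h => hw (dotProduct_self_eq_zero.mp h))

end Householder

theorem sum_col_dotProduct_mulVec {n : Type*} [Fintype n] (C Ψ : Matrix n n ℝ) :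
    ∑ i, Ψᵀ i ⬝ᵥ C *ᵥ Ψᵀ i = trace (C * (Ψ * Ψᵀ)) := by
  calc ∑ i, Ψᵀ i ⬝ᵥ C *ᵥ Ψᵀ i = trace (Ψᵀ * C * Ψ) := by simp only [trace, diag, mul_mul_apply]
    _ = trace (C * (Ψ * Ψᵀ)) := by rw [Matrix.mul_assoc, trace_mul_comm, Matrix.mul_assoc]

end Matrix

section Spectral

variable {n : Type*} [Fintype n] [DecidableEq n] {u : n → n → ℝ}

theorem Matrix.of_mul_transpose_of_orthonormal
    (horth : ∀ k l, u k ⬝ᵥ u l = if k = l then 1 else 0) : of u * (of u)ᵀ = 1 := by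
  ext k l
  exact horth k l

theorem Matrix.eq_transpose_mul_diagonal_mul {H : Matrix n n ℝ} {lam : n → ℝ}
    (horth : ∀ k l, u k ⬝ᵥ u l = if k = l then 1 else 0) (heig : ∀ k, H *ᵥ u k = lam k • u k) :
    H = (of u)ᵀ * diagonal lam * of u := by
  have hHU : H * (of u)ᵀ = (of u)ᵀ * diagonal lam := by
    ext a b
    rw [mul_diagonal]
    exact (congrFun (heig b) a).trans (mul_comm _ _)
  rw [← hHU, Matrix.mul_assoc, mul_eq_one_comm.mp (of_mul_transpose_of_orthonormal horth),
    Matrix.mul_one]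

/-- Every `Ψ` with `ΨΨᵀ = a H` is of this form, with `R` orthogonal. -/
noncomputable def eigenJacobian (u : n → n → ℝ) (lam : n → ℝ) (a : ℝ) (R : Matrix n n ℝ) :
    Matrix n n ℝ :=
  (of u)ᵀ * diagonal (fun j => √(a * lam j)) * R

variable {lam : n → ℝ} {a : ℝ} {R : Matrix n n ℝ}

theorem inv_smul_eigenJacobian_mul_transpose {H : Matrix n n ℝ}
    (horth : ∀ k l, u k ⬝ᵥ u l = if k = l then 1 else 0) (heig : ∀ k, H *ᵥ u k = lam k • u k)
    (ha : 0 < a) (hlam : ∀ j, 0 ≤ lam j) (hR : R * Rᵀ = 1) :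
    a⁻¹ • (eigenJacobian u lam a R * (eigenJacobian u lam a R)ᵀ) = H := by
  have hD : diagonal (fun j => √(a * lam j)) * diagonal (fun j => √(a * lam j)) =
      a • diagonal lam := by
    rw [diagonal_mul_diagonal, ← diagonal_smul]
    congr 1
    ext j
    exact Real.mul_self_sqrt (mul_nonneg ha.le (hlam j))
  calc a⁻¹ • (eigenJacobian u lam a R * (eigenJacobian u lam a R)ᵀ)
      = a⁻¹ • ((of u)ᵀ * (diagonal (fun j => √(a * lam j)) * (R * Rᵀ) *
          diagonal (fun j => √(a * lam j))) * of u) := by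
        simp only [eigenJacobian, transpose_mul, diagonal_transpose, transpose_transpose,
          Matrix.mul_assoc]
    _ = H := by
        rw [hR, Matrix.mul_one, hD, Matrix.mul_smul, Matrix.smul_mul, inv_smul_smul₀ ha.ne',
          ← eq_transpose_mul_diagonal_mul horth heig]

theorem dotProduct_eigenJacobian_col (horth : ∀ k l, u k ⬝ᵥ u l = if k = l then 1 else 0)
    (k i : n) : u k ⬝ᵥ (eigenJacobian u lam a R)ᵀ i = √(a * lam k) * R k i := by
  change (of u * eigenJacobian u lam a R) k i = _
  rw [eigenJacobian, ← Matrix.mul_assoc, ← Matrix.mul_assoc,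
    of_mul_transpose_of_orthonormal horth, Matrix.one_mul, diagonal_mul]

theorem eigenJacobian_col_of_mulVec_single {k : n} {c : ℝ}
    (hR : R *ᵥ Pi.single k 1 = Pi.single k c) :
    (eigenJacobian u lam a R)ᵀ k = (c * √(a * lam k)) • u k := by
  change (eigenJacobian u lam a R).col k = _
  rw [← mulVec_single_one, eigenJacobian, ← mulVec_mulVec, hR, ← mulVec_mulVec,
    diagonal_mulVec_single, mulVec_single, op_smul_eq_smul, mul_comm]
  rfl

@[fun_prop]
theorem continuous_eigenJacobian (u : n → n → ℝ) (lam : n → ℝ) (a : ℝ) :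
    Continuous (eigenJacobian u lam a) := by
  unfold eigenJacobian
  fun_prop

end Spectral

section NoiseCov

variable {N : ℕ} {H : Matrix (Fin N) (Fin N) ℝ} (C : Matrix (Fin N) (Fin N) ℝ)

@[fun_prop]
theorem continuous_noiseCov : Continuous (noiseCov N H C) := by
  unfold noiseCov
  fun_prop

theorem dotProduct_noiseCov_mulVec (Ψ : Matrix (Fin N) (Fin N) ℝ) (hH : H.IsSymm)
    {v : Fin N → ℝ} {μ : ℝ} (hv : H *ᵥ v = μ • v) :
    v ⬝ᵥ noiseCov N H C Ψ *ᵥ v =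
      (N : ℝ)⁻¹ * ∑ i, (Ψᵀ i ⬝ᵥ C *ᵥ Ψᵀ i) * (v ⬝ᵥ Ψᵀ i) ^ 2 - μ ^ 2 * (v ⬝ᵥ C *ᵥ v) := by
  have hHCH : v ⬝ᵥ (H * C * H) *ᵥ v = μ ^ 2 * (v ⬝ᵥ C *ᵥ v) := by
    rw [← mulVec_mulVec, ← mulVec_mulVec, hv, dotProduct_mulVec, ← mulVec_transpose, hH.eq, hv]
    simp only [mulVec_smul, smul_dotProduct, dotProduct_smul, smul_eq_mul]
    ring
  rw [noiseCov, sub_mulVec, dotProduct_sub, hHCH, smul_mulVec, dotProduct_smul, smul_eq_mul,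
    sum_mulVec, dotProduct_sum]
  congr 2
  refine Finset.sum_congr rfl fun i _ => ?_
  change v ⬝ᵥ ((Ψᵀ i ⬝ᵥ C *ᵥ Ψᵀ i) • vecMulVec (Ψᵀ i) (Ψᵀ i)) *ᵥ v = _
  rw [smul_mulVec, dotProduct_smul, vecMulVec_mulVec, op_smul_eq_smul, dotProduct_smul,
    smul_eq_mul, smul_eq_mul, dotProduct_comm (Ψᵀ i) v]
  ring

variable {Ψ : Matrix (Fin N) (Fin N) ℝ} {v : Fin N → ℝ} {μ : ℝ}

theorem dotProduct_noiseCov_mulVec_of_sq_dotProduct_col (hH : H.IsSymm) (hv : H *ᵥ v = μ • v)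
    (hΨ : (N : ℝ)⁻¹ • (Ψ * Ψᵀ) = H) (hcol : ∀ i, (v ⬝ᵥ Ψᵀ i) ^ 2 = μ) :
    v ⬝ᵥ noiseCov N H C Ψ *ᵥ v = μ * (trace (H * C) - μ * (v ⬝ᵥ C *ᵥ v)) := by
  rw [dotProduct_noiseCov_mulVec C Ψ hH hv]
  simp only [hcol]
  rw [← Finset.sum_mul, sum_col_dotProduct_mulVec, ← hΨ, smul_mul, trace_smul, smul_eq_mul,
    trace_mul_comm C]
  ring

theorem dotProduct_noiseCov_mulVec_of_col_eq_smul (hH : H.IsSymm) (hv : H *ᵥ v = μ • v)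
    (hv1 : v ⬝ᵥ v = 1) {k : Fin N} {c : ℝ} (hk : Ψᵀ k = c • v) (hc : c ^ 2 = N * μ)
    (hoff : ∀ i ≠ k, v ⬝ᵥ Ψᵀ i = 0) :
    v ⬝ᵥ noiseCov N H C Ψ *ᵥ v = (N - 1) * μ ^ 2 * (v ⬝ᵥ C *ᵥ v) := by
  have hN : (N : ℝ) ≠ 0 := Nat.cast_ne_zero.mpr k.pos.ne'
  rw [dotProduct_noiseCov_mulVec C Ψ hH hv,
    Finset.sum_eq_single k (fun i _ hi => by rw [hoff i hi]; ring) (by simp), hk]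
  simp only [mulVec_smul, smul_dotProduct, dotProduct_smul, hv1, smul_eq_mul]
  field_simp
  linear_combination (v ⬝ᵥ C *ᵥ v) * (c ^ 2 + N * μ) * hc

end NoiseCov

section Endpoints

variable {N : ℕ} {H : Matrix (Fin N) (Fin N) ℝ} (C : Matrix (Fin N) (Fin N) ℝ)
  {u : Fin N → Fin N → ℝ} {lam : Fin N → ℝ}

theorem dotProduct_noiseCov_eigenJacobian_householder_single (hH : H.IsSymm)
    (horth : ∀ k l, u k ⬝ᵥ u l = if k = l then 1 else 0) (heig : ∀ k, H *ᵥ u k = lam k • u k)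
    (hlam : ∀ j, 0 ≤ lam j) (k : Fin N) :
    u k ⬝ᵥ noiseCov N H C (eigenJacobian u lam N (householder (Pi.single k 1))) *ᵥ u k =
      (N - 1) * lam k ^ 2 * (u k ⬝ᵥ C *ᵥ u k) := by
  have hR : householder (Pi.single k 1) *ᵥ Pi.single k 1 = Pi.single k (-1 : ℝ) := by
    rw [householder_mulVec_self (by simp), Pi.single_neg]
  refine dotProduct_noiseCov_mulVec_of_col_eq_smul C hH (heig k) (by simpa using horth k k)
    (eigenJacobian_col_of_mulVec_single hR) ?_ fun i hi => ?_
  · rw [neg_one_mul, neg_sq, Real.sq_sqrt (mul_nonneg N.cast_nonneg (hlam k))]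
  · rw [dotProduct_eigenJacobian_col horth, householder_apply_eq_mulVec_single, hR]
    simp [hi]

/-- The sign of the constant vector keeps the reflection vector nonzero, also when `N = 1`. -/
theorem dotProduct_noiseCov_eigenJacobian_householder_single_sub_const (hH : H.IsSymm)
    (horth : ∀ k l, u k ⬝ᵥ u l = if k = l then 1 else 0) (heig : ∀ k, H *ᵥ u k = lam k • u k)
    (hlam : ∀ j, 0 ≤ lam j) (k : Fin N) :
    u k ⬝ᵥ noiseCov N H C
        (eigenJacobian u lam N (householder (Pi.single k 1 - fun _ => -(√N)⁻¹))) *ᵥ u k =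
      lam k * (trace (H * C) - lam k * (u k ⬝ᵥ C *ᵥ u k)) := by
  have hN : (0 : ℝ) < N := Nat.cast_pos.mpr k.pos
  set m : Fin N → ℝ := fun _ => -(√N)⁻¹
  have hm : m ⬝ᵥ m = 1 := by
    simp [m, dotProduct, ← sq, inv_pow, Real.sq_sqrt hN.le, hN.ne']
  have hem : Pi.single k 1 ≠ m := fun h => by
    have := congrFun h k
    simp only [m, Pi.single_eq_same] at this
    have : 0 < (√N)⁻¹ := by positivity
    linarith
  refine dotProduct_noiseCov_mulVec_of_sq_dotProduct_col C hH (heig k)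
    (inv_smul_eigenJacobian_mul_transpose horth heig hN hlam
      (householder_mul_transpose (sub_ne_zero.mpr hem))) fun i => ?_
  rw [dotProduct_eigenJacobian_col horth, householder_apply_eq_mulVec_single,
    householder_sub_mulVec hem (by simpa using hm.symm), mul_pow,
    Real.sq_sqrt (mul_nonneg hN.le (hlam k))]
  simp only [m, even_two, Even.neg_pow, inv_pow, Real.sq_sqrt hN.le]
  field_simp

end Endpoints

theorem sigma_kk_attainable_general
    (N : ℕ)
    (H C : Matrix (Fin N) (Fin N) ℝ)
    (hHsymm : H.IsSymm)
    (u : Fin N → Fin N → ℝ) (lam : Fin N → ℝ)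
    (horth : ∀ k l, u k ⬝ᵥ u l = if k = l then 1 else 0)
    (heig : ∀ k, H.mulVec (u k) = lam k • u k)
    (hpos : ∀ k, 0 < lam k)
    (k : Fin N)
    (Ckk A B : ℝ)
    (hCkk : Ckk = u k ⬝ᵥ C.mulVec (u k))
    (hA : A = lam k * ((H * C).trace - lam k * Ckk))
    (hB : B = ((N : ℝ) - 1) * lam k ^ 2 * Ckk)
    (s : ℝ) (hs₁ : min A B ≤ s) (hs₂ : s ≤ max A B) :
    ∃ Ψ : Matrix (Fin N) (Fin N) ℝ,
      (N : ℝ)⁻¹ • (Ψ * Ψᵀ) = H ∧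
      u k ⬝ᵥ (noiseCov N H C Ψ).mulVec (u k) = s := by
  have hlam : ∀ j, 0 ≤ lam j := fun j => (hpos j).le
  let S := {w : Fin N → ℝ | 0 < w k}
  have hS : S ⊆ {w | w ≠ 0} := fun w hw h => by simp [S, h] at hw
  let g w := u k ⬝ᵥ noiseCov N H C (eigenJacobian u lam N (householder w)) *ᵥ u k
  have hg : ContinuousOn g S :=
    (by fun_prop : Continuous fun R => u k ⬝ᵥ noiseCov N H C (eigenJacobian u lam N R) *ᵥ u k)
      |>.comp_continuousOn (continuousOn_householder.mono hS)
  have hgS : IsPreconnected (g '' S) :=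
    ((convex_halfSpace_gt (LinearMap.proj k : (Fin N → ℝ) →ₗ[ℝ] ℝ).isLinear 0).isPreconnected).image
      g hg
  have hgA : g _ = A := (dotProduct_noiseCov_eigenJacobian_householder_single_sub_const C hHsymm
    horth heig hlam k).trans (by rw [hA, hCkk])
  have hgB : g _ = B :=
    (dotProduct_noiseCov_eigenJacobian_householder_single C hHsymm horth heig hlam k).trans
      (by rw [hB, hCkk])
  obtain ⟨w, hw, rfl⟩ := (isPreconnected_iff_ordConnected.mp hgS).uIcc_subset
    ⟨_, by simpa [S] using (by positivity : (0 : ℝ) < 1 + (√N)⁻¹), hgA⟩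
    ⟨_, by simp [S], hgB⟩ ⟨hs₁, hs₂⟩
  exact ⟨_, inv_smul_eigenJacobian_mul_transpose horth heig (Nat.cast_pos.mpr k.pos) hlam
    (householder_mul_transpose (hS hw)), rfl⟩

/-- Attainability of the spectral component `Σ_kk = u_kᵀ Σ(C) u_k`: for fixed `H`
(symmetric positive definite, with orthonormal eigenbasis `u_k` and eigenvalues
`λ_k > 0`) and fixed symmetric PSD `C`, every value `s` between
`A = λ_k(Tr(HC) − λ_k C_kk)` and `B = (N−1)λ_k² C_kk` is attained by some Jacobian
`Ψ` with `(1/N)ΨΨᵀ = H`. -/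
theorem sigma_kk_attainable
    (N : ℕ) (hN : 1 ≤ N)
    (H C : Matrix (Fin N) (Fin N) ℝ)
    (hHsymm : H.IsSymm) (hC : C.PosSemidef)
    (u : Fin N → Fin N → ℝ) (lam : Fin N → ℝ)
    (horth : ∀ k l, u k ⬝ᵥ u l = if k = l then 1 else 0)
    (heig : ∀ k, H.mulVec (u k) = lam k • u k)
    (hpos : ∀ k, 0 < lam k)
    (k : Fin N)
    (Ckk A B : ℝ)
    (hCkk : Ckk = u k ⬝ᵥ C.mulVec (u k))
    (hA : A = lam k * ((H * C).trace - lam k * Ckk))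
    (hB : B = ((N : ℝ) - 1) * lam k ^ 2 * Ckk)
    (s : ℝ) (hs₁ : min A B ≤ s) (hs₂ : s ≤ max A B) :
    ∃ Ψ : Matrix (Fin N) (Fin N) ℝ,
      (N : ℝ)⁻¹ • (Ψ * Ψᵀ) = H ∧
      u k ⬝ᵥ (noiseCov N H C Ψ).mulVec (u k) = s :=
  sigma_kk_attainable_general N H C hHsymm u lam horth heig hpos k Ckk A B hCkk hA hB s hs₁ hs₂
end

section
/- For all real numbers a, β, γ, z with −1 < β < 1, 0 < a < 2(β + 1), 0 ≤ γ ≤ 1, and 0 < z < 1, one has S(a, β, γ, z) > 0, where S(a, β, γ, z) = a²βγz² + a²βz² + a²γz − a²z − 2aβ²z² − 2aβz² + 2aβz + 2az − β³z³ + β³z² + β²z² − β²z + βz² − βz − z + 1. -/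
/-- Positivity of the stability polynomial `S(a, β, γ, z)` of SGD with momentum
under the SE approximation, on the region `-1 < β < 1`, `0 < a < 2(β+1)`,
`0 ≤ γ ≤ 1`, `0 < z < 1`. -/
theorem stability_polynomial_pos
    (a β γ z : ℝ)
    (hβ₁ : -1 < β) (hβ₂ : β < 1)
    (ha₁ : 0 < a) (ha₂ : a < 2 * (β + 1))
    (hγ₁ : 0 ≤ γ) (hγ₂ : γ ≤ 1)
    (hz₁ : 0 < z) (hz₂ : z < 1) :
    0 < a ^ 2 * β * γ * z ^ 2 + a ^ 2 * β * z ^ 2 + a ^ 2 * γ * z - a ^ 2 * z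
        - 2 * a * β ^ 2 * z ^ 2 - 2 * a * β * z ^ 2 + 2 * a * β * z + 2 * a * z
        - β ^ 3 * z ^ 3 + β ^ 3 * z ^ 2 + β ^ 2 * z ^ 2 - β ^ 2 * z
        + β * z ^ 2 - β * z - z + 1 := by
  have h1 : 0 < 1 - β * z := by nlinarith
  have h2 : 0 < 1 + β * z := by nlinarith
  have h3 : 0 < 1 - β ^ 2 * z := by nlinarith
  have h4 : 0 < (1 - z) * (1 - β ^ 2 * z) + a * z * (2 * (β + 1) - a) := by
    have := mul_pos (sub_pos.mpr hz₂) h3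
    have := mul_pos (mul_pos ha₁ hz₁) (sub_pos.mpr ha₂)
    linarith
  have h5 : 0 < (1 - β * z) * ((1 - z) * (1 - β ^ 2 * z) + a * z * (2 * (β + 1) - a)) :=
    mul_pos h1 h4
  have h6 : 0 ≤ γ * a ^ 2 * z * (1 + β * z) := by positivity
  nlinarith [h5, h6]
end

section
/- Let λ : ℕ → ℝ be a summable sequence with λ_k > 0 for all k, set λ_max = sup_k λ_k, and let τ ∈ (0, 1]. Let λ_crit > 0 satisfy Σ_k λ_k/(τλ_k + λ_crit) = 1. Let β ∈ (−1, 1), γ ∈ (0, 1], and α > 0 with α·λ_max < 2(β + 1); set Y = (1 − β)/(γ(1 + β)) and α_eff = α/(1 − β). Then: (a) if Σ_k λ_k/(λ_k(τ − Y) + 2(1 − β)/(αγ)) < 1 (all summands having positive denominators), then α_eff < 2/(γ·λ_crit); (b) if x > 0 satisfies λ_k(τ − Y) + x > 0 for all k and Σ_k λ_k/(λ_k(τ − Y) + x) = 1, then λ_crit ≤ x ≤ λ_crit + Y·λ_max. -/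
open Filter

/-- Summability of the generic series `λ_k / (λ_k * a + c)`. -/
lemma summable_div_linear (lam : ℕ → ℝ) (hlam : ∀ k, 0 < lam k) (hsum : Summable lam)
    (a c : ℝ) (hc : 0 < c) (hpos : ∀ k, 0 < lam k * a + c) :
    Summable (fun k => lam k / (lam k * a + c)) := by
  have h0 : Filter.Tendsto (fun k => lam k * a + c) atTop (nhds c) := by
    have := (hsum.tendsto_atTop_zero.mul_const a).add_const c
    simpa using this
  have hev : ∀ᶠ k in atTop, c / 2 ≤ lam k * a + c :=
    h0.eventually (eventually_ge_nhds (by linarith))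
  obtain ⟨N, hN⟩ := eventually_atTop.mp hev
  rw [← summable_nat_add_iff N]
  have hs2 : Summable (fun n => lam (n + N) / (c / 2)) :=
    ((summable_nat_add_iff N).mpr hsum).div_const _
  refine Summable.of_nonneg_of_le (fun n => ?_) (fun n => ?_) hs2
  · exact div_nonneg (hlam _).le (hpos _).le
  · exact div_le_div_of_nonneg_left (hlam _).le (by linarith) (hN _ (Nat.le_add_left N n))

/-- Effective learning rate stability bound. With `Y = (1−β)/(γ(1+β))` and
`α_eff = α/(1−β)`: (a) if `Ũ(1) = Σ_k λ_k/(λ_k(τ−Y) + 2(1−β)/(αγ)) < 1` (with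
positive denominators) then `α_eff < 2/(γ·λ_crit)`; (b) any `x > 0` with positive
denominators and `Σ_k λ_k/(λ_k(τ−Y) + x) = 1` satisfies
`λ_crit ≤ x ≤ λ_crit + Y·λ_max`. -/
theorem eff_lr_stability
    (lam : ℕ → ℝ) (hlam : ∀ k, 0 < lam k) (hsum : Summable lam)
    (τ : ℝ) (hτ₁ : 0 < τ) (hτ₂ : τ ≤ 1)
    (lamCrit : ℝ) (hcrit_pos : 0 < lamCrit)
    (hcrit : ∑' k, lam k / (τ * lam k + lamCrit) = 1)
    (β γ α : ℝ) (hβ₁ : -1 < β) (hβ₂ : β < 1) (hγ₁ : 0 < γ) (hγ₂ : γ ≤ 1)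
    (hα : 0 < α)
    (hmax : α * (⨆ k, lam k) < 2 * (β + 1)) :
    ((∀ k, 0 < lam k * (τ - (1 - β) / (γ * (1 + β))) + 2 * (1 - β) / (α * γ)) →
      (∑' k, lam k / (lam k * (τ - (1 - β) / (γ * (1 + β))) + 2 * (1 - β) / (α * γ))) < 1 →
      α / (1 - β) < 2 / (γ * lamCrit)) ∧
    (∀ x : ℝ, 0 < x →
      (∀ k, 0 < lam k * (τ - (1 - β) / (γ * (1 + β))) + x) →
      (∑' k, lam k / (lam k * (τ - (1 - β) / (γ * (1 + β))) + x)) = 1 →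
      lamCrit ≤ x ∧ x ≤ lamCrit + ((1 - β) / (γ * (1 + β))) * (⨆ k, lam k)) := by
  set Y : ℝ := (1 - β) / (γ * (1 + β)) with hYdef
  have hβ1 : 0 < 1 - β := by linarith
  have hβ1' : 0 < 1 + β := by linarith
  have hY : 0 < Y := div_pos hβ1 (mul_pos hγ₁ hβ1')
  have hbdd : BddAbove (Set.range lam) := hsum.tendsto_atTop_zero.bddAbove_range
  have hle_sup : ∀ k, lam k ≤ ⨆ k, lam k := fun k => le_ciSup hbdd k
  have hdenH : ∀ k, 0 < τ * lam k + lamCrit :=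
    fun k => by have := hlam k; positivity
  have hHsum : Summable (fun k => lam k / (τ * lam k + lamCrit)) := by
    refine Summable.of_nonneg_of_le (fun k => div_nonneg (hlam k).le (hdenH k).le)
      (fun k => ?_) (hsum.div_const lamCrit)
    exact div_le_div_of_nonneg_left (hlam k).le hcrit_pos
      (by nlinarith [hlam k])
  constructor
  · intro hpos hlt
    set c : ℝ := 2 * (1 - β) / (α * γ) with hcdef
    have hc : 0 < c := by positivity
    by_contra hcon
    push_neg at hcon
    -- hcon : 2 / (γ * lamCrit) ≤ α / (1 - β)  gives  c ≤ lamCrit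
    have hclam : c ≤ lamCrit := by
      rw [div_le_div_iff₀ (mul_pos hγ₁ hcrit_pos) hβ1] at hcon
      rw [hcdef, div_le_iff₀ (mul_pos hα hγ₁)]
      nlinarith
    have hFsum : Summable (fun k => lam k / (lam k * (τ - Y) + c)) :=
      summable_div_linear lam hlam hsum _ _ hc hpos
    have hle : ∀ k, lam k / (τ * lam k + lamCrit) ≤ lam k / (lam k * (τ - Y) + c) := by
      intro k
      refine div_le_div_of_nonneg_left (hlam k).le (hpos k) ?_
      have := mul_nonneg hY.le (hlam k).le
      nlinarith
    have := Summable.tsum_le_tsum hle hHsum hFsum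
    rw [hcrit] at this
    linarith
  · intro x hx hpos hEq
    have hFsum : Summable (fun k => lam k / (lam k * (τ - Y) + x)) :=
      summable_div_linear lam hlam hsum _ _ hx hpos
    constructor
    · by_contra hcon
      push_neg at hcon
      have hdenG : ∀ k, 0 < τ * lam k + x := fun k => by have := hlam k; positivity
      have hGsum : Summable (fun k => lam k / (τ * lam k + x)) := by
        refine Summable.of_nonneg_of_le (fun k => div_nonneg (hlam k).le (hdenG k).le)
          (fun k => ?_) (hsum.div_const x)
        exact div_le_div_of_nonneg_left (hlam k).le hx (by nlinarith [hlam k])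
      have h1 : ∀ k, lam k / (τ * lam k + x) ≤ lam k / (lam k * (τ - Y) + x) := by
        intro k
        refine div_le_div_of_nonneg_left (hlam k).le (hpos k) ?_
        have := mul_nonneg hY.le (hlam k).le
        nlinarith
      have h2 : (fun k => lam k / (τ * lam k + lamCrit)) ≤
          (fun k => lam k / (τ * lam k + x)) := by
        intro k
        exact div_le_div_of_nonneg_left (hlam k).le (hdenG k) (by linarith)
      have h2' : lam 0 / (τ * lam 0 + lamCrit) < lam 0 / (τ * lam 0 + x) :=
        div_lt_div_of_pos_left (hlam 0) (hdenG 0) (by linarith)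
      have hA := Summable.tsum_lt_tsum h2 h2' hHsum hGsum
      have hB := Summable.tsum_le_tsum h1 hGsum hFsum
      rw [hcrit] at hA
      rw [hEq] at hB
      linarith
    · by_contra hcon
      push_neg at hcon
      set M : ℝ := ⨆ k, lam k with hMdef
      have hYM : 0 ≤ Y * M :=
        mul_nonneg hY.le (le_trans (hlam 0).le (hle_sup 0))
      have hxYM : lamCrit < x - Y * M := by linarith
      have hdenG : ∀ k, 0 < τ * lam k + (x - Y * M) := fun k => by
        have := hlam k; nlinarith
      have hGsum : Summable (fun k => lam k / (τ * lam k + (x - Y * M))) := by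
        refine Summable.of_nonneg_of_le (fun k => div_nonneg (hlam k).le (hdenG k).le)
          (fun k => ?_) (hsum.div_const (x - Y * M))
        exact div_le_div_of_nonneg_left (hlam k).le (by linarith)
          (by nlinarith [hlam k])
      have h1 : ∀ k, lam k / (lam k * (τ - Y) + x) ≤ lam k / (τ * lam k + (x - Y * M)) := by
        intro k
        refine div_le_div_of_nonneg_left (hlam k).le (hdenG k) ?_
        have := mul_le_mul_of_nonneg_left (hle_sup k) hY.le
        nlinarith
      have h2 : ∀ k, lam k / (τ * lam k + (x - Y * M)) ≤ lam k / (τ * lam k + lamCrit) := by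
        intro k
        exact div_le_div_of_nonneg_left (hlam k).le (hdenH k) (by linarith)
      have h2' : lam 0 / (τ * lam 0 + (x - Y * M)) < lam 0 / (τ * lam 0 + lamCrit) :=
        div_lt_div_of_pos_left (hlam 0) (hdenH 0) (by linarith)
      have hA := Summable.tsum_le_tsum h1 hFsum hGsum
      have hB := Summable.tsum_lt_tsum h2 h2' hGsum hHsum
      rw [hcrit] at hB
      rw [hEq] at hA
      linarith
end

section
/- Let C, S : ℕ → ℝ (indexed by k ≥ 1) with C_l ≥ 0 for all l, suppose C is summable, and suppose there exist ν, ϰ > 0 such that S_k·k^ν → 1 and (Σ_{l≥k} C_l)·k^ϰ → 1 as k → ∞. Set ζ = ϰ/ν. Then (Σ_{l≥k} C_l·S_l)·k^{ϰ+ν} → ζ/(ζ + 1) as k → ∞; that is, Σ_{l≥k} C_l S_l = (ζ/(ζ+1))·k^{−ϰ−ν}·(1 + o(1)). -/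
open Filter Topology Asymptotics

/-!
Let `F k = ∑_{l ≥ k} C l` and `p = ϰ + ν`. Tails of nonnegative summable sequences preserve
asymptotic equivalence, so `S l` may be replaced by `l ^ (-ν)`. Summation by parts gives
`∑_{l ≥ k} C l l ^ (-ν) = F k k ^ (-ν) - ∑_{l ≥ k} F (l + 1) (l ^ (-ν) - (l + 1) ^ (-ν))`.
As `n ^ (-q) - (n + 1) ^ (-q) ~ q (n + 1) ^ (-(q + 1))` (the derivative of `x ^ (-q)` at `1`),
the last summand is equivalent to `ν / p` times the telescoping difference
`n ^ (-p) - (n + 1) ^ (-p)`, so its tail is `(ν / p) k ^ (-p) (1 + o(1))`. Altogether the tail is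
`(1 - ν / p) k ^ (-p) (1 + o(1))`, and `1 - ν / p = ζ / (ζ + 1)`.
-/

noncomputable def tailSum (f : ℕ → ℝ) (k : ℕ) : ℝ := ∑' l, f (k + l)

section TailSum

variable {f g : ℕ → ℝ}

theorem Summable.comp_nat_add_left (hf : Summable f) (k : ℕ) : Summable fun l => f (k + l) :=
  hf.comp_injective (add_right_injective k)

theorem tendsto_tailSum_zero (f : ℕ → ℝ) : Tendsto (tailSum f) atTop (𝓝 0) :=
  (tendsto_sum_nat_add f).congr fun k => by simp only [tailSum, add_comm k]

theorem Summable.tailSum_eq_add (hf : Summable f) (k : ℕ) :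
    tailSum f k = f k + tailSum f (k + 1) := by
  rw [tailSum, (hf.comp_nat_add_left k).tsum_eq_zero_add]
  simp only [add_zero, tailSum, ← add_assoc, add_right_comm k _ 1]

theorem tailSum_sub_succ (hg : Tendsto g atTop (𝓝 0))
    (hs : Summable fun l => g l - g (l + 1)) (k : ℕ) :
    tailSum (fun l => g l - g (l + 1)) k = g k := by
  have hpartial : ∀ N, ∑ l ∈ Finset.range N, (g (k + l) - g (k + l + 1)) = g k - g (k + N) :=
    fun N => by
      simpa only [add_zero, add_assoc] using Finset.sum_range_sub' (fun l => g (k + l)) N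
  refine tendsto_nhds_unique (hs.comp_nat_add_left k).hasSum.tendsto_sum_nat ?_
  simpa only [hpartial, sub_zero] using
    tendsto_const_nhds.sub ((hg.comp (tendsto_add_atTop_nat k)).congr fun N =>
      congrArg g (add_comm N k))

theorem tailSum_mul_by_parts {C b : ℕ → ℝ} {M : ℝ} (hC : Summable C) (hb : ∀ l, |b l| ≤ M)
    (hD : Summable fun l => tailSum C (l + 1) * (b l - b (l + 1))) (k : ℕ) :
    tailSum (fun l => C l * b l) k
      = tailSum C k * b k - tailSum (fun l => tailSum C (l + 1) * (b l - b (l + 1))) k := by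
  have hCb : Summable fun l => C l * b l :=
    (hC.abs.mul_right M).of_norm_bounded fun l => by
      rw [Real.norm_eq_abs, abs_mul]; exact mul_le_mul_of_nonneg_left (hb l) (abs_nonneg _)
  have hG : Tendsto (fun m => tailSum C m * b m) atTop (𝓝 0) :=
    (tendsto_tailSum_zero C).zero_mul_isBoundedUnder_le (isBoundedUnder_of ⟨M, hb⟩)
  have hsplit : ∀ m, C m * b m + tailSum C (m + 1) * (b m - b (m + 1))
      = tailSum C m * b m - tailSum C (m + 1) * b (m + 1) := fun m => by
    rw [hC.tailSum_eq_add m]; ring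
  have htel : tailSum (fun m => C m * b m + tailSum C (m + 1) * (b m - b (m + 1))) k
      = tailSum C k * b k := by
    simpa only [hsplit] using tailSum_sub_succ hG ((hCb.add hD).congr hsplit) k
  have hadd := (hCb.comp_nat_add_left k).tsum_add (hD.comp_nat_add_left k)
  simp only [tailSum] at htel hadd ⊢
  linarith

theorem Asymptotics.IsEquivalent.tailSum {u v : ℕ → ℝ} (huv : u ~[atTop] v)
    (hv : ∀ᶠ l in atTop, 0 ≤ v l) (hvs : Summable v) :
    _root_.tailSum u ~[atTop] _root_.tailSum v := by
  have hus : Summable (u - v) := summable_of_isBigO_nat hvs huv.isLittleO.isBigO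
  refine isLittleO_iff.2 fun ε hε => ?_
  obtain ⟨N, hN⟩ := eventually_atTop.1 ((huv.isLittleO.bound hε).and hv)
  filter_upwards [eventually_ge_atTop N] with k hk
  have hdiff : _root_.tailSum u k - _root_.tailSum v k = ∑' l, (u - v) (k + l) := by
    have hu : Summable u := by simpa using hus.add hvs
    rw [_root_.tailSum, _root_.tailSum,
      ← (hu.comp_nat_add_left k).tsum_sub (hvs.comp_nat_add_left k)]
    rfl
  have hvk : 0 ≤ _root_.tailSum v k :=
    tsum_nonneg fun l => (hN (k + l) (hk.trans (Nat.le_add_right k l))).2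
  rw [Pi.sub_apply, hdiff, Real.norm_of_nonneg hvk]
  refine tsum_of_norm_bounded ((hvs.comp_nat_add_left k).hasSum.mul_left ε) fun l => ?_
  have h := hN (k + l) (hk.trans (Nat.le_add_right k l))
  rw [Real.norm_of_nonneg h.2] at h
  exact h.1

end TailSum

theorem eventually_natCast_pos : ∀ᶠ n : ℕ in atTop, (0 : ℝ) < n :=
  tendsto_natCast_atTop_atTop.eventually_gt_atTop 0

theorem isEquivalent_rpow_neg_of_tendsto_mul_rpow {α : Type*} {l : Filter α} {f u : α → ℝ}
    {c q : ℝ} (hc : c ≠ 0) (hu : ∀ᶠ x in l, 0 < u x)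
    (h : Tendsto (fun x => f x * u x ^ q) l (𝓝 c)) :
    f ~[l] fun x => c * u x ^ (-q) := by
  have hconst : (fun x => f x * u x ^ q) ~[l] fun _ => c :=
    (isEquivalent_const_iff_tendsto hc).2 h
  refine (hconst.mul (IsEquivalent.refl (u := fun x => u x ^ (-q)))).congr_left ?_
  filter_upwards [hu] with x hx
  simp only [Pi.mul_apply, Real.rpow_neg hx.le]
  field_simp [(Real.rpow_pos_of_pos hx q).ne']

noncomputable def rpowNegDiff (q : ℝ) (n : ℕ) : ℝ := (n : ℝ) ^ (-q) - ((n + 1 : ℕ) : ℝ) ^ (-q)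

theorem tendsto_rpowNegDiff_mul_rpow (q : ℝ) :
    Tendsto (fun n : ℕ => rpowNegDiff q n * ((n + 1 : ℕ) : ℝ) ^ (q + 1)) atTop (𝓝 q) := by
  have hslope : Tendsto (slope (fun x : ℝ => x ^ (-q)) 1) (𝓝[≠] 1) (𝓝 (-q)) := by
    rw [← hasDerivAt_iff_tendsto_slope]
    simpa using Real.hasDerivAt_rpow_const (p := -q) (Or.inl one_ne_zero)
  have hratio : Tendsto (fun n : ℕ => (n : ℝ) / (n + 1)) atTop (𝓝[≠] 1) :=
    tendsto_nhdsWithin_iff.2 ⟨tendsto_natCast_div_add_atTop 1, Eventually.of_forall fun n =>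
      ((div_lt_one (Nat.cast_add_one_pos n)).2 (lt_add_one _)).ne⟩
  have hlim := (hslope.comp hratio).neg
  rw [neg_neg] at hlim
  refine hlim.congr fun n => ?_
  have hm : (0 : ℝ) < n + 1 := Nat.cast_add_one_pos n
  have hsplit : (n : ℝ) ^ (-q) = ((n : ℝ) / (n + 1)) ^ (-q) * ((n : ℝ) + 1) ^ (-q) := by
    rw [← Real.mul_rpow (by positivity) hm.le, div_mul_cancel₀ _ hm.ne']
  have hpow : ((n : ℝ) + 1) ^ (-q) * ((n : ℝ) + 1) ^ (q + 1) = n + 1 := by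
    rw [← Real.rpow_add hm]; simp
  simp only [rpowNegDiff, Function.comp_apply, slope_def_field, Real.one_rpow, Nat.cast_add_one]
  rw [hsplit]
  field_simp
  rw [mul_assoc, hpow]
  ring

theorem isEquivalent_rpowNegDiff {q : ℝ} (hq : q ≠ 0) :
    rpowNegDiff q ~[atTop] fun n => q * ((n + 1 : ℕ) : ℝ) ^ (-(q + 1)) :=
  isEquivalent_rpow_neg_of_tendsto_mul_rpow hq (Eventually.of_forall fun _ => by positivity)
    (tendsto_rpowNegDiff_mul_rpow q)

theorem summable_rpowNegDiff {q : ℝ} (hq : 0 < q) : Summable (rpowNegDiff q) :=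
  summable_of_isBigO_nat (((summable_nat_add_iff 1).2 (Real.summable_nat_rpow.2
    (by linarith))).mul_left q) (isEquivalent_rpowNegDiff hq.ne').isBigO

theorem tailSum_rpowNegDiff {q : ℝ} (hq : 0 < q) (k : ℕ) :
    tailSum (rpowNegDiff q) k = (k : ℝ) ^ (-q) :=
  tailSum_sub_succ ((tendsto_rpow_neg_atTop hq).comp tendsto_natCast_atTop_atTop)
    (summable_rpowNegDiff hq) k

theorem Asymptotics.IsEquivalent.tendsto_tailSum_mul_rpow {D : ℕ → ℝ} {c q : ℝ} (hc : 0 ≤ c)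
    (hq : 0 < q) (hD : D ~[atTop] fun n => c * rpowNegDiff q n) :
    Tendsto (fun k : ℕ => _root_.tailSum D k * (k : ℝ) ^ q) atTop (𝓝 c) := by
  have hnonneg : ∀ᶠ n in atTop, 0 ≤ c * rpowNegDiff q n :=
    eventually_natCast_pos.mono fun n hn => mul_nonneg hc (sub_nonneg.2
      (Real.rpow_le_rpow_of_nonpos hn (by push_cast; linarith) (by linarith)))
  have htail : _root_.tailSum (fun n => c * rpowNegDiff q n) = fun k : ℕ => c * (k : ℝ) ^ (-q) :=
    funext fun k => by
      rw [_root_.tailSum, tsum_mul_left, ← _root_.tailSum, tailSum_rpowNegDiff hq]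
  have hequiv := hD.tailSum hnonneg ((summable_rpowNegDiff hq).mul_left c)
  rw [htail] at hequiv
  refine (hequiv.mul IsEquivalent.refl).symm.tendsto_nhds (tendsto_const_nhds.congr' ?_)
  filter_upwards [eventually_natCast_pos] with k hk
  rw [Pi.mul_apply, mul_assoc, ← Real.rpow_add hk, neg_add_cancel, Real.rpow_zero, mul_one]

theorem isEquivalent_succ_mul_rpowNegDiff {F : ℕ → ℝ} {ν ϰ : ℝ} (hν : ν ≠ 0) (hp : ϰ + ν ≠ 0)
    (hF : Tendsto (fun k : ℕ => F k * (k : ℝ) ^ ϰ) atTop (𝓝 1)) :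
    (fun n => F (n + 1) * rpowNegDiff ν n) ~[atTop]
      fun n => ν / (ϰ + ν) * rpowNegDiff (ϰ + ν) n := by
  have hFsucc : (fun n => F (n + 1)) ~[atTop] fun n : ℕ => ((n + 1 : ℕ) : ℝ) ^ (-ϰ) := by
    have hFeq : F ~[atTop] fun n : ℕ => (n : ℝ) ^ (-ϰ) := by
      simpa only [one_mul] using isEquivalent_rpow_neg_of_tendsto_mul_rpow one_ne_zero
        eventually_natCast_pos hF
    exact hFeq.comp_tendsto (tendsto_add_atTop_nat 1)
  have hpow : ∀ n : ℕ, ((n + 1 : ℕ) : ℝ) ^ (-ϰ) * (ν * ((n + 1 : ℕ) : ℝ) ^ (-(ν + 1)))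
      = ν / (ϰ + ν) * ((ϰ + ν) * ((n + 1 : ℕ) : ℝ) ^ (-(ϰ + ν + 1))) := fun n => by
    rw [mul_left_comm, ← Real.rpow_add (by positivity), ← mul_assoc, div_mul_cancel₀ _ hp]
    ring_nf
  exact ((hFsucc.mul (isEquivalent_rpowNegDiff hν)).congr_right
    (Eventually.of_forall hpow)).trans (IsEquivalent.refl.mul (isEquivalent_rpowNegDiff hp)).symm

theorem natCast_rpow_neg_le_one {ν : ℝ} (hν : 0 ≤ ν) (n : ℕ) : (n : ℝ) ^ (-ν) ≤ 1 := by
  rcases Nat.eq_zero_or_pos n with rfl | hn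
  · simpa using Real.zero_rpow_le_one (-ν)
  · exact Real.rpow_le_one_of_one_le_of_nonpos (Nat.one_le_cast.2 hn) (by linarith)

theorem tendsto_tailSum_mul_rpow_neg_mul_rpow {C : ℕ → ℝ} {ν ϰ : ℝ} (hC : Summable C)
    (hν : 0 < ν) (hp : 0 < ϰ + ν)
    (hF : Tendsto (fun k : ℕ => tailSum C k * (k : ℝ) ^ ϰ) atTop (𝓝 1)) :
    Tendsto (fun k : ℕ => tailSum (fun l => C l * (l : ℝ) ^ (-ν)) k * (k : ℝ) ^ (ϰ + ν))
      atTop (𝓝 (ϰ / (ϰ + ν))) := by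
  have hD := isEquivalent_succ_mul_rpowNegDiff hν.ne' hp.ne' hF
  have hDsum : Summable fun n => tailSum C (n + 1) * rpowNegDiff ν n :=
    summable_of_isBigO_nat ((summable_rpowNegDiff hp).mul_left _) hD.isBigO
  have hDtail := hD.tendsto_tailSum_mul_rpow (by positivity) hp
  have hbound : ∀ l : ℕ, |(l : ℝ) ^ (-ν)| ≤ 1 := fun l => by
    rw [abs_of_nonneg (by positivity)]; exact natCast_rpow_neg_le_one hν.le l
  rw [show ϰ / (ϰ + ν) = 1 - ν / (ϰ + ν) by field_simp; ring]
  refine (hF.sub hDtail).congr' ?_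
  filter_upwards [eventually_natCast_pos] with k hk
  rw [tailSum_mul_by_parts hC hbound hDsum k, sub_mul, mul_assoc, ← Real.rpow_add hk,
    show -ν + (ϰ + ν) = ϰ by ring]
  rfl

/-- Tail sum asymptotics under power laws: if `C_l ≥ 0`, `C` is summable,
`S_k = k^{−ν}(1+o(1))` and `Σ_{l≥k} C_l = k^{−ϰ}(1+o(1))`, then with `ζ = ϰ/ν`
one has `Σ_{l≥k} C_l S_l = (ζ/(ζ+1))·k^{−ϰ−ν}(1+o(1))`. -/
theorem tail_sum_asymptotics
    (C S : ℕ → ℝ) (hC : ∀ l, 0 ≤ C l) (hCsum : Summable C)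
    (ν ϰ : ℝ) (hν : 0 < ν) (hϰ : 0 < ϰ)
    (hS : Tendsto (fun k : ℕ => S k * (k : ℝ) ^ ν) atTop (𝓝 1))
    (hF : Tendsto (fun k : ℕ => (∑' l, C (k + l)) * (k : ℝ) ^ ϰ) atTop (𝓝 1)) :
    Tendsto (fun k : ℕ => (∑' l, C (k + l) * S (k + l)) * (k : ℝ) ^ (ϰ + ν))
      atTop (𝓝 ((ϰ / ν) / (ϰ / ν + 1))) := by
  have hSeq : S ~[atTop] fun l : ℕ => (l : ℝ) ^ (-ν) := by
    simpa only [one_mul] using isEquivalent_rpow_neg_of_tendsto_mul_rpow one_ne_zero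
      eventually_natCast_pos hS
  have htail : tailSum (fun l => C l * S l) ~[atTop] tailSum (fun l => C l * (l : ℝ) ^ (-ν)) :=
    (IsEquivalent.refl.mul hSeq).tailSum
      (Eventually.of_forall fun l => mul_nonneg (hC l) (by positivity))
      (Summable.of_nonneg_of_le (fun l => mul_nonneg (hC l) (by positivity))
        (fun l => mul_le_of_le_one_right (hC l) (natCast_rpow_neg_le_one hν.le l)) hCsum)
  rw [show ϰ / ν / (ϰ / ν + 1) = ϰ / (ϰ + ν) by field_simp]
  exact (htail.mul IsEquivalent.refl).symm.tendsto_nhds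
    (tendsto_tailSum_mul_rpow_neg_mul_rpow hCsum hν (by positivity) hF)
end

section
/- Let λ : ℕ → ℝ be a summable sequence with λ_k ≥ 0 for all k and λ_max := sup_k λ_k > 0, let τ ∈ (0, 1], γ ∈ (0, 1], and ζ > 0. Define Ũ₁(α, β) = Σ_k γαλ_k(β + 1)/(αβτγλ_k + αβλ_k + ατγλ_k − αλ_k − 2β² + 2). Suppose α_max ∈ (0, 2/λ_max] satisfies Ũ₁(α_max, 0) = 1, and let α* ∈ (0, α_max) be the unique minimizer of α ↦ α^{−ζ}/(1 − Ũ₁(α, 0)) on (0, α_max). Then there exists d < 0 such that the function β ↦ (1 − β)^{ζ}/(1 − Ũ₁(α*, β)) has derivative d at β = 0 (in the sense of HasDerivAt). -/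
open Filter Set

/-!
At `β = 0` the loss is `α ^ (-ζ) / (1 - V α)` with `V α = Ũ₁(α, 0)`, so the first-order condition
at the interior minimiser reads `α* V'(α*) = ζ (1 - V α*)`. Differentiating term by term,
`∂_β Ũ₁(α*, 0) = α* V'(α*) - ∑ₖ 2γ(α*λ_k)² / D_k²`, where `D_k = 2 - α*λ_k (1 - τγ) ≥ 2τγ` is the
`k`-th denominator at `β = 0`. So the derivative `(∂_β Ũ₁ - ζ (1 - V)) / (1 - V)²` of the loss at
`β = 0` is `-(∑ₖ 2γ(α*λ_k)² / D_k²) / (1 - V)² < 0`; here `V α* < V αmax = 1` because `V` is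
strictly increasing.
-/

theorem mul_deriv_eq_of_isLocalMin_rpow_neg_div {V : ℝ → ℝ} {V' α ζ : ℝ} (hα : 0 < α)
    (hV : HasDerivAt V V' α) (hV1 : V α ≠ 1)
    (hmin : IsLocalMin (fun a => a ^ (-ζ) / (1 - V a)) α) :
    α * V' = ζ * (1 - V α) := by
  have hden : 1 - V α ≠ 0 := sub_ne_zero.mpr hV1.symm
  have h0 := hmin.hasDerivAt_eq_zero <|
    (Real.hasDerivAt_rpow_const (p := -ζ) (Or.inl hα.ne')).div
      ((hasDerivAt_const α 1).sub hV) hden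
  have hpow : α ^ (-ζ) = α ^ (-ζ - 1) * α := by
    rw [← Real.rpow_add_one hα.ne']; ring_nf
  rw [div_eq_zero_iff, or_iff_left (pow_ne_zero 2 hden), hpow] at h0
  have hpos : 0 < α ^ (-ζ - 1) := Real.rpow_pos_of_pos hα _
  refine mul_left_cancel₀ hpos.ne' ?_
  linear_combination h0

theorem hasDerivAt_one_sub_rpow_div_one_sub {U : ℝ → ℝ} {U' : ℝ} (ζ : ℝ)
    (hU : HasDerivAt U U' 0) (hU1 : U 0 ≠ 1) :
    HasDerivAt (fun β => (1 - β) ^ ζ / (1 - U β)) ((U' - ζ * (1 - U 0)) / (1 - U 0) ^ 2) 0 := by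
  have hnum : HasDerivAt (fun β : ℝ => (1 - β) ^ ζ) (-ζ) 0 := by
    simpa [Function.comp_def] using
      (Real.hasDerivAt_rpow_const (x := 1 - 0) (p := ζ) (Or.inl (by norm_num))).comp 0
      ((hasDerivAt_const (0 : ℝ) (1 : ℝ)).sub (hasDerivAt_id 0))
  refine (hnum.fun_div ((hasDerivAt_const 0 1).fun_sub hU)
    (sub_ne_zero.mpr hU1.symm)).congr_deriv ?_
  simp only [sub_zero, Real.one_rpow]
  ring

def noiseDen (τ γ α β l : ℝ) : ℝ :=
  α * β * τ * γ * l + α * β * l + α * τ * γ * l - α * l - 2 * β ^ 2 + 2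

/-- `Ũ₁(α, β) = ∑' k, noiseTerm τ γ α β (λ k)`. -/
noncomputable def noiseTerm (τ γ α β l : ℝ) : ℝ :=
  γ * α * l * (β + 1) / noiseDen τ γ α β l

section Term

variable {τ γ α β l : ℝ}

theorem noiseDen_zero : noiseDen τ γ α 0 l = 2 - α * l * (1 - τ * γ) := by
  unfold noiseDen; ring

theorem two_mul_le_noiseDen_zero (hc1 : τ * γ ≤ 1) (hαl : α * l ≤ 2) :
    2 * (τ * γ) ≤ noiseDen τ γ α 0 l := by
  rw [noiseDen_zero]; nlinarith

theorem half_le_noiseDen (hc1 : τ * γ ≤ 1) (hαl₀ : 0 ≤ α * l) (hαl : α * l ≤ 2)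
    (hβ : |β| < τ * γ / 4) : τ * γ / 2 ≤ noiseDen τ γ α β l := by
  have hden : noiseDen τ γ α β l = noiseDen τ γ α 0 l + α * l * (1 + τ * γ) * β - 2 * β ^ 2 := by
    unfold noiseDen; ring
  have hc : 0 < τ * γ := by linarith [abs_nonneg β]
  have hlin : |α * l * (1 + τ * γ) * β| ≤ τ * γ := by
    have ha : α * l * (1 + τ * γ) ≤ 4 := by nlinarith
    rw [abs_mul, abs_of_nonneg (by positivity)]
    nlinarith [abs_nonneg β]
  have hsq : β ^ 2 ≤ τ * γ / 8 := by
    rw [← sq_abs]; nlinarith [abs_nonneg β]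
  nlinarith [two_mul_le_noiseDen_zero hc1 hαl, neg_abs_le (α * l * (1 + τ * γ) * β)]

theorem noiseTerm_zero_le_of_le (hγ : 0 ≤ γ) (hc : 0 < τ * γ) (hc1 : τ * γ ≤ 1) (hl : 0 ≤ l)
    {α' : ℝ} (hαα' : α ≤ α') (hα'l : α' * l ≤ 2) :
    noiseTerm τ γ α 0 l ≤ noiseTerm τ γ α' 0 l := by
  have hD := two_mul_le_noiseDen_zero hc1 ((mul_le_mul_of_nonneg_right hαα' hl).trans hα'l)
  have hD' := two_mul_le_noiseDen_zero hc1 hα'l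
  unfold noiseTerm
  rw [div_le_div_iff₀ (by linarith) (by linarith), noiseDen_zero, noiseDen_zero]
  nlinarith [mul_nonneg (mul_nonneg hγ hl) (sub_nonneg.2 hαα')]

theorem noiseTerm_zero_lt_of_lt (hγ : 0 < γ) (hc : 0 < τ * γ) (hc1 : τ * γ ≤ 1) (hl : 0 < l)
    {α' : ℝ} (hαα' : α < α') (hα'l : α' * l ≤ 2) :
    noiseTerm τ γ α 0 l < noiseTerm τ γ α' 0 l := by
  have hD := two_mul_le_noiseDen_zero hc1 ((mul_le_mul_of_nonneg_right hαα'.le hl.le).trans hα'l)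
  have hD' := two_mul_le_noiseDen_zero hc1 hα'l
  unfold noiseTerm
  rw [div_lt_div_iff₀ (by linarith) (by linarith), noiseDen_zero, noiseDen_zero]
  nlinarith [mul_pos (mul_pos hγ hl) (sub_pos.2 hαα')]

theorem abs_noiseTerm_zero_le (hγ : 0 ≤ γ) (hc : 0 < τ * γ) (hc1 : τ * γ ≤ 1) (hl : 0 ≤ l)
    (hα : 0 ≤ α) (hαl : α * l ≤ 2) :
    |noiseTerm τ γ α 0 l| ≤ γ * α / (2 * (τ * γ)) * l := by
  have hD := two_mul_le_noiseDen_zero hc1 hαl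
  unfold noiseTerm
  rw [abs_of_nonneg (div_nonneg (by positivity) (by linarith)), zero_add, mul_one,
    div_mul_eq_mul_div]
  exact div_le_div_of_nonneg_left (by positivity) (by positivity) hD

theorem hasDerivAt_noiseTerm_zero (hD : noiseDen τ γ α 0 l ≠ 0) :
    HasDerivAt (fun a => noiseTerm τ γ a 0 l) (2 * γ * l / noiseDen τ γ α 0 l ^ 2) α := by
  have hnum : HasDerivAt (fun a : ℝ => γ * a * l * (0 + 1)) (γ * l) α := by
    simpa using ((hasDerivAt_id α).const_mul γ).mul_const l
  have hden : HasDerivAt (fun a => noiseDen τ γ a 0 l) (-(l * (1 - τ * γ))) α := by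
    refine ((((hasDerivAt_id α).mul_const (l * (1 - τ * γ))).const_sub 2).congr_deriv
      (by simp)).congr_of_eventuallyEq (.of_forall fun a => ?_)
    simp only [noiseDen_zero, id]; ring
  refine (hnum.fun_div hden hD).congr_deriv ?_
  rw [noiseDen_zero]; ring

theorem abs_two_mul_div_noiseDen_zero_sq_le (hγ : 0 ≤ γ) (hc : 0 < τ * γ) (hc1 : τ * γ ≤ 1)
    (hl : 0 ≤ l) (hαl : α * l ≤ 2) :
    |2 * γ * l / noiseDen τ γ α 0 l ^ 2| ≤ 2 * γ / (2 * (τ * γ)) ^ 2 * l := by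
  have hD := two_mul_le_noiseDen_zero hc1 hαl
  rw [abs_of_nonneg (by positivity), div_mul_eq_mul_div]
  exact div_le_div_of_nonneg_left (by positivity) (by positivity)
    (pow_le_pow_left₀ (by positivity) hD 2)

theorem hasDerivAt_noiseTerm (hD : noiseDen τ γ α β l ≠ 0) :
    HasDerivAt (fun b => noiseTerm τ γ α b l)
      (2 * γ * α * l * ((1 + β) ^ 2 - α * l) / noiseDen τ γ α β l ^ 2) β := by
  have hnum : HasDerivAt (fun b : ℝ => γ * α * l * (b + 1)) (γ * α * l) β := by
    simpa using ((hasDerivAt_id β).add_const 1).const_mul (γ * α * l)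
  have hden : HasDerivAt (fun b => noiseDen τ γ α b l)
      (α * l * (1 + τ * γ) - 4 * β) β := by
    have h : HasDerivAt (fun b => α * l * (1 + τ * γ) * b - 2 * b ^ 2 + noiseDen τ γ α 0 l)
        (α * l * (1 + τ * γ) - 4 * β) β := by
      refine ((((hasDerivAt_id β).const_mul (α * l * (1 + τ * γ))).sub
        ((hasDerivAt_pow 2 β).const_mul 2)).add_const _).congr_deriv ?_
      push_cast; ring
    exact h.congr_of_eventuallyEq (.of_forall fun b => by unfold noiseDen; ring)
  refine (hnum.fun_div hden hD).congr_deriv ?_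
  unfold noiseDen; ring

theorem abs_deriv_noiseTerm_le (hγ : 0 ≤ γ) (hc1 : τ * γ ≤ 1) (hl : 0 ≤ l) (hα : 0 ≤ α)
    (hαl : α * l ≤ 2) (hβ : |β| < τ * γ / 4) :
    |2 * γ * α * l * ((1 + β) ^ 2 - α * l) / noiseDen τ γ α β l ^ 2|
      ≤ 16 * γ * α / (τ * γ) ^ 2 * l := by
  have hc : 0 < τ * γ := by linarith [abs_nonneg β]
  have hD := half_le_noiseDen hc1 (by positivity) hαl hβ
  obtain ⟨hβl, hβu⟩ := abs_lt.mp hβ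
  have hfac : |(1 + β) ^ 2 - α * l| ≤ 2 := by
    rw [abs_le]; constructor <;> nlinarith
  rw [abs_div, abs_mul, abs_of_nonneg (by positivity : (0 : ℝ) ≤ 2 * γ * α * l), abs_pow,
    abs_of_pos (by linarith : 0 < noiseDen τ γ α β l)]
  calc 2 * γ * α * l * |(1 + β) ^ 2 - α * l| / noiseDen τ γ α β l ^ 2
      ≤ 2 * γ * α * l * 2 / (τ * γ / 2) ^ 2 := by
        gcongr
    _ = 16 * γ * α / (τ * γ) ^ 2 * l := by field_simp; ring

end Term

section Series

variable {τ γ α : ℝ} {lam : ℕ → ℝ}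

theorem summable_noiseTerm_zero (hγ : 0 ≤ γ) (hc : 0 < τ * γ) (hc1 : τ * γ ≤ 1)
    (hlam : ∀ k, 0 ≤ lam k) (hsum : Summable lam) (hα : 0 ≤ α) (hαl : ∀ k, α * lam k ≤ 2) :
    Summable fun k => noiseTerm τ γ α 0 (lam k) :=
  .of_norm_bounded (hsum.mul_left _) fun k => abs_noiseTerm_zero_le hγ hc hc1 (hlam k) hα (hαl k)

theorem tsum_noiseTerm_zero_lt_of_lt (hγ : 0 < γ) (hc : 0 < τ * γ) (hc1 : τ * γ ≤ 1)
    (hlam : ∀ k, 0 ≤ lam k) (hsum : Summable lam) (hα : 0 ≤ α) {α' : ℝ} (hαα' : α < α')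
    (hα'l : ∀ k, α' * lam k ≤ 2) {k₀ : ℕ} (hk₀ : 0 < lam k₀) :
    ∑' k, noiseTerm τ γ α 0 (lam k) < ∑' k, noiseTerm τ γ α' 0 (lam k) :=
  have hαl k : α * lam k ≤ 2 := (mul_le_mul_of_nonneg_right hαα'.le (hlam k)).trans (hα'l k)
  Summable.tsum_lt_tsum (fun k => noiseTerm_zero_le_of_le hγ.le hc hc1 (hlam k) hαα'.le (hα'l k))
    (noiseTerm_zero_lt_of_lt hγ hc hc1 hk₀ hαα' (hα'l k₀))
    (summable_noiseTerm_zero hγ.le hc hc1 hlam hsum hα hαl)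
    (summable_noiseTerm_zero hγ.le hc hc1 hlam hsum (hα.trans hαα'.le) hα'l)

theorem hasDerivAt_tsum_noiseTerm_zero (hγ : 0 ≤ γ) (hc : 0 < τ * γ) (hc1 : τ * γ ≤ 1)
    (hlam : ∀ k, 0 ≤ lam k) (hsum : Summable lam) {αmax : ℝ} (hmax : ∀ k, αmax * lam k ≤ 2)
    (hα : α ∈ Ioo 0 αmax) :
    HasDerivAt (fun a => ∑' k, noiseTerm τ γ a 0 (lam k))
      (∑' k, 2 * γ * lam k / noiseDen τ γ α 0 (lam k) ^ 2) α := by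
  have hle : ∀ a ∈ Ioo 0 αmax, ∀ k, a * lam k ≤ 2 := fun a ha k =>
    (mul_le_mul_of_nonneg_right ha.2.le (hlam k)).trans (hmax k)
  have hD : ∀ a ∈ Ioo 0 αmax, ∀ k, noiseDen τ γ a 0 (lam k) ≠ 0 := fun a ha k =>
    (lt_of_lt_of_le (by positivity) (two_mul_le_noiseDen_zero hc1 (hle a ha k))).ne'
  exact hasDerivAt_tsum_of_isPreconnected (hsum.mul_left _) isOpen_Ioo isPreconnected_Ioo
    (fun k a ha => hasDerivAt_noiseTerm_zero (hD a ha k))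
    (fun k a ha => abs_two_mul_div_noiseDen_zero_sq_le hγ hc hc1 (hlam k) (hle a ha k)) hα
    (summable_noiseTerm_zero hγ hc hc1 hlam hsum hα.1.le (hle α hα)) hα

theorem hasDerivAt_tsum_noiseTerm (hγ : 0 ≤ γ) (hc : 0 < τ * γ) (hc1 : τ * γ ≤ 1)
    (hlam : ∀ k, 0 ≤ lam k) (hsum : Summable lam) (hα : 0 ≤ α) (hαl : ∀ k, α * lam k ≤ 2) :
    HasDerivAt (fun b => ∑' k, noiseTerm τ γ α b (lam k))
      (∑' k, 2 * γ * α * lam k * (1 - α * lam k) / noiseDen τ γ α 0 (lam k) ^ 2) 0 := by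
  have hD : ∀ b ∈ Ioo (-(τ * γ / 4)) (τ * γ / 4), ∀ k, noiseDen τ γ α b (lam k) ≠ 0 :=
    fun b hb k => (lt_of_lt_of_le (by positivity)
      (half_le_noiseDen hc1 (mul_nonneg hα (hlam k)) (hαl k) (abs_lt.2 hb))).ne'
  have h0 : (0 : ℝ) ∈ Ioo (-(τ * γ / 4)) (τ * γ / 4) := ⟨by linarith, by linarith⟩
  simpa only [add_zero, one_pow] using
    hasDerivAt_tsum_of_isPreconnected (hsum.mul_left _) isOpen_Ioo isPreconnected_Ioo
      (fun k b hb => hasDerivAt_noiseTerm (hD b hb k))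
      (fun k b hb => abs_deriv_noiseTerm_le hγ hc1 (hlam k) hα (hαl k) (abs_lt.2 hb)) h0
      (summable_noiseTerm_zero hγ hc hc1 hlam hsum hα hαl) h0

theorem tsum_deriv_noiseTerm_lt (hγ : 0 < γ) (hc : 0 < τ * γ) (hc1 : τ * γ ≤ 1)
    (hlam : ∀ k, 0 ≤ lam k) (hsum : Summable lam) (hα : 0 < α) (hαl : ∀ k, α * lam k ≤ 2)
    {k₀ : ℕ} (hk₀ : 0 < lam k₀) :
    ∑' k, 2 * γ * α * lam k * (1 - α * lam k) / noiseDen τ γ α 0 (lam k) ^ 2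
      < α * ∑' k, 2 * γ * lam k / noiseDen τ γ α 0 (lam k) ^ 2 := by
  have hD k : 0 < noiseDen τ γ α 0 (lam k) :=
    lt_of_lt_of_le (by positivity) (two_mul_le_noiseDen_zero hc1 (hαl k))
  have hgap k : α * (2 * γ * lam k / noiseDen τ γ α 0 (lam k) ^ 2)
      - 2 * γ * α * lam k * (1 - α * lam k) / noiseDen τ γ α 0 (lam k) ^ 2
      = 2 * γ * (α * lam k) ^ 2 / noiseDen τ γ α 0 (lam k) ^ 2 := by
    ring
  have h0 : |(0 : ℝ)| < τ * γ / 4 := by rw [abs_zero]; positivity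
  rw [← tsum_mul_left]
  refine Summable.tsum_lt_tsum (i := k₀) (fun k => ?_) ?_ ?_ ?_
  · rw [← sub_nonneg, hgap]; positivity
  · rw [← sub_pos, hgap]; have := hD k₀; positivity
  · refine .of_norm_bounded (hsum.mul_left (16 * γ * α / (τ * γ) ^ 2)) fun k => ?_
    simpa only [Real.norm_eq_abs, add_zero, one_pow] using
      abs_deriv_noiseTerm_le hγ.le hc1 (hlam k) hα.le (hαl k) h0
  · exact (Summable.of_norm_bounded (hsum.mul_left _) fun k =>
      abs_two_mul_div_noiseDen_zero_sq_le hγ.le hc hc1 (hlam k) (hαl k)).mul_left α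

end Series

theorem signal_momentum_beneficial_general
    (lam : ℕ → ℝ) (hlam : ∀ k, 0 ≤ lam k) (hsum : Summable lam)
    (hmaxpos : 0 < ⨆ k, lam k)
    (τ γ ζ : ℝ) (hτ₁ : 0 < τ) (hτ₂ : τ ≤ 1) (hγ₁ : 0 < γ) (hγ₂ : γ ≤ 1)
    (U1 : ℝ → ℝ → ℝ)
    (hU1 : ∀ α β, U1 α β = ∑' k, γ * α * lam k * (β + 1) /
        (α * β * τ * γ * lam k + α * β * lam k + α * τ * γ * lam k
          - α * lam k - 2 * β ^ 2 + 2))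
    (αmax : ℝ) (hαmax : αmax ∈ Set.Ioc 0 (2 / ⨆ k, lam k))
    (hUmax : U1 αmax 0 = 1)
    (αstar : ℝ) (hstar_mem : αstar ∈ Set.Ioo 0 αmax)
    (hstar_min : ∀ α ∈ Set.Ioo 0 αmax, α ≠ αstar →
        αstar ^ (-ζ) / (1 - U1 αstar 0) < α ^ (-ζ) / (1 - U1 α 0)) :
    ∃ d : ℝ, d < 0 ∧
      HasDerivAt (fun β : ℝ => (1 - β) ^ ζ / (1 - U1 αstar β)) d 0 := by
  obtain rfl : U1 = fun α β => ∑' k, noiseTerm τ γ α β (lam k) := funext₂ hU1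
  beta_reduce at hUmax hstar_min ⊢
  have hc : 0 < τ * γ := mul_pos hτ₁ hγ₁
  have hc1 : τ * γ ≤ 1 := mul_le_one₀ hτ₂ hγ₁.le hγ₂
  have hbdd : BddAbove (range lam) := hsum.tendsto_atTop_zero.bddAbove_range
  have hmax k : αmax * lam k ≤ 2 :=
    calc αmax * lam k ≤ 2 / (⨆ k, lam k) * ⨆ k, lam k :=
          mul_le_mul hαmax.2 (le_ciSup hbdd k) (hlam k) (by positivity)
      _ = 2 := div_mul_cancel₀ _ hmaxpos.ne'
  have hstar k : αstar * lam k ≤ 2 :=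
    (mul_le_mul_of_nonneg_right hstar_mem.2.le (hlam k)).trans (hmax k)
  obtain ⟨k₀, hk₀⟩ : ∃ k, 0 < lam k := (lt_ciSup_iff hbdd).1 hmaxpos
  have hV : ∑' k, noiseTerm τ γ αstar 0 (lam k) < 1 := hUmax ▸
    tsum_noiseTerm_zero_lt_of_lt hγ₁ hc hc1 hlam hsum hstar_mem.1.le hstar_mem.2 hmax hk₀
  have hmin : IsLocalMin (fun a => a ^ (-ζ) / (1 - ∑' k, noiseTerm τ γ a 0 (lam k))) αstar :=
    eventually_of_mem (Ioo_mem_nhds hstar_mem.1 hstar_mem.2) fun α hα => by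
      rcases eq_or_ne α αstar with rfl | hne
      exacts [le_rfl, (hstar_min α hα hne).le]
  have hfoc := mul_deriv_eq_of_isLocalMin_rpow_neg_div hstar_mem.1
    (hasDerivAt_tsum_noiseTerm_zero hγ₁.le hc hc1 hlam hsum hmax hstar_mem) hV.ne hmin
  refine ⟨_, div_neg_of_neg_of_pos ?_ (pow_pos (sub_pos.2 hV) 2),
    hasDerivAt_one_sub_rpow_div_one_sub ζ
      (hasDerivAt_tsum_noiseTerm hγ₁.le hc hc1 hlam hsum hstar_mem.1.le hstar) hV.ne⟩
  linarith [tsum_deriv_noiseTerm_lt hγ₁ hc hc1 hlam hsum hstar_mem.1 hstar hk₀]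

/-- Positive momentum is beneficial in the signal-dominated phase: at the
`β = 0` optimal learning rate `α*`, the approximate late-time loss
`β ↦ (1−β)^ζ/(1 − Ũ₁(α*, β))` has a strictly negative derivative at `β = 0`,
where `Ũ₁(α, β) = Σ_k γαλ_k(β+1)/(αβτγλ_k + αβλ_k + ατγλ_k − αλ_k − 2β² + 2)`. -/
theorem signal_momentum_beneficial
    (lam : ℕ → ℝ) (hlam : ∀ k, 0 ≤ lam k) (hsum : Summable lam)
    (hmaxpos : 0 < ⨆ k, lam k)
    (τ γ ζ : ℝ) (hτ₁ : 0 < τ) (hτ₂ : τ ≤ 1) (hγ₁ : 0 < γ) (hγ₂ : γ ≤ 1) (hζ : 0 < ζ)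
    (U1 : ℝ → ℝ → ℝ)
    (hU1 : ∀ α β, U1 α β = ∑' k, γ * α * lam k * (β + 1) /
        (α * β * τ * γ * lam k + α * β * lam k + α * τ * γ * lam k
          - α * lam k - 2 * β ^ 2 + 2))
    (αmax : ℝ) (hαmax : αmax ∈ Set.Ioc 0 (2 / ⨆ k, lam k))
    (hUmax : U1 αmax 0 = 1)
    (αstar : ℝ) (hstar_mem : αstar ∈ Set.Ioo 0 αmax)
    (hstar_min : ∀ α ∈ Set.Ioo 0 αmax, α ≠ αstar →
        αstar ^ (-ζ) / (1 - U1 αstar 0) < α ^ (-ζ) / (1 - U1 α 0)) :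
    ∃ d : ℝ, d < 0 ∧
      HasDerivAt (fun β : ℝ => (1 - β) ^ ζ / (1 - U1 αstar β)) d 0 :=
  signal_momentum_beneficial_general lam hlam hsum hmaxpos τ γ ζ hτ₁ hτ₂ hγ₁ hγ₂ U1 hU1 αmax hαmax
    hUmax αstar hstar_mem hstar_min
end

section
/- Let ν > 1, and let λ, c : ℕ → ℝ be summable sequences with λ_k ≥ 0, c_k ≥ 0, Σ_k λ_k > 0 and Σ_k c_k > 0. Set α* = 2(ν − 1)/((3ν − 1)·Σ_k λ_k), and define Ũ₁(β) = Σ_k α* λ_k (β + 1)/(2α*βλ_k + 2 − 2β²) and Ṽ₁(β) = Σ_k c_k·(2α*βλ_k + β³ − β² − β + 1)/(α*·(2α*βλ_k + 2 − 2β²)). Let F(β) = (1 − β)^{−1/ν}·Ṽ₁(β)/(1 − Ũ₁(β))² and Ξ = ν·(Σ_k λ_k)·(Σ_k λ_k c_k) − (ν − 1)·(Σ_k λ_k²)·(Σ_k c_k). Then there exists d ∈ ℝ such that F has derivative d at β = 0 (in the sense of HasDerivAt), and d > 0 if and only if Ξ > 0, and d < 0 if and only if Ξ < 0. -/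
/-!
Both generating functions are series `∑ₖ wₖ φ(β, λₖ)` of rational functions of `β` whose
denominator `2αβλ + 2 − 2β²` equals `2` at `β = 0`. Since `λₖ → 0`, the parameters `λₖ` range over
a compact set, so the partial derivatives `∂_β φ(β, λₖ)` are uniformly bounded near `β = 0` and the
series may be differentiated termwise. At `α = α*` this gives `Ũ₁(0) = (ν − 1)/(3ν − 1)`, and
the quotient rule turns `F'(0)` into `Ξ · (3ν − 1)² / (8ν³ Tr H)`.
-/

open Filter Metric Set Function

theorem Summable.mul_of_summable {ι : Type*} {f g : ι → ℝ} (hf : Summable f) (hg : Summable g) :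
    Summable fun k => f k * g k := by
  refine summable_of_isBigO hg ?_
  simpa using (hf.tendsto_cofinite_zero.isBigO_one ℝ).mul (Asymptotics.isBigO_refl g cofinite)

theorem hasDerivAt_tsum_mul_apply_of_isCompact {ι E : Type*} [TopologicalSpace E] {w : ι → ℝ}
    (hw : Summable w) {x : ι → E} {K : Set E} (hK : IsCompact K) (hx : ∀ k, x k ∈ K)
    {φ φ' : ℝ → E → ℝ} {W : Set (ℝ × E)} (hW : IsOpen W) {β₀ : ℝ} (hKW : {β₀} ×ˢ K ⊆ W)
    (hφ : ∀ p ∈ W, HasDerivAt (φ · p.2) (φ' p.1 p.2) p.1)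
    (hφ' : ContinuousOn (uncurry φ') W) (hφ₀ : ContinuousOn (φ β₀) K) :
    HasDerivAt (fun β => ∑' k, w k * φ β (x k)) (∑' k, w k * φ' β₀ (x k)) β₀ := by
  -- By the tube lemma `W` contains `closedBall β₀ r ×ˢ K`, a compact set on which `φ'` is bounded.
  obtain ⟨U, V, hU, -, hβ₀U, hKV, hUVW⟩ := generalized_tube_lemma isCompact_singleton hK hW hKW
  obtain ⟨ε, hε, hεU⟩ := Metric.isOpen_iff.1 hU β₀ (hβ₀U rfl)
  have hball : closedBall β₀ (ε / 2) ×ˢ K ⊆ W :=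
    fun p hp => hUVW ⟨hεU (closedBall_subset_ball (half_lt_self hε) hp.1), hKV hp.2⟩
  obtain ⟨M, hM⟩ := ((isCompact_closedBall β₀ (ε / 2)).prod hK).exists_bound_of_continuousOn
    (hφ'.mono hball)
  obtain ⟨M₀, hM₀⟩ := hK.exists_bound_of_continuousOn hφ₀
  have hβ₀ : β₀ ∈ ball β₀ (ε / 2) := mem_ball_self (half_pos hε)
  refine hasDerivAt_tsum_of_isPreconnected (g := fun k β => w k * φ β (x k))
    (hw.abs.mul_right M) isOpen_ball (convex_ball β₀ (ε / 2)).isPreconnected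
    (fun k β hβ => (hφ (β, x k) (hball ⟨ball_subset_closedBall hβ, hx k⟩)).const_mul (w k))
    (fun k β hβ => ?_) hβ₀ ?_ hβ₀
  · rw [norm_mul, Real.norm_eq_abs]
    exact mul_le_mul_of_nonneg_left (hM (β, x k) ⟨ball_subset_closedBall hβ, hx k⟩) (abs_nonneg _)
  · refine Summable.of_norm_bounded (hw.abs.mul_right M₀) fun k => ?_
    rw [norm_mul, Real.norm_eq_abs]
    exact mul_le_mul_of_nonneg_left (hM₀ (x k) (hx k)) (abs_nonneg _)

theorem hasDerivAt_one_sub_rpow_mul_div_one_sub_sq {p u v : ℝ} {U V : ℝ → ℝ}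
    (hU : HasDerivAt U u 0) (hV : HasDerivAt V v 0) (hU0 : U 0 ≠ 1) :
    HasDerivAt (fun β => (1 - β) ^ p * V β / (1 - U β) ^ 2)
      ((v - p * V 0) / (1 - U 0) ^ 2 + 2 * V 0 * u / (1 - U 0) ^ 3) 0 := by
  have hpow : HasDerivAt (fun β : ℝ => (1 - β) ^ p) (-p) 0 := by
    simpa using ((hasDerivAt_id (0 : ℝ)).const_sub 1).rpow_const (p := p) (by norm_num)
  have hU0' : 1 - U 0 ≠ 0 := sub_ne_zero.2 hU0.symm
  refine ((hpow.mul hV).div ((hU.const_sub 1).pow 2) (pow_ne_zero 2 hU0')).congr_deriv ?_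
  simp only [Pi.mul_apply, Pi.pow_apply, sub_zero, Real.one_rpow, one_mul]
  field_simp
  ring

theorem sign_eq_of_eq_mul_pos {d a p : ℝ} (hp : 0 < p) (hd : d = a * p) :
    (0 < d ↔ 0 < a) ∧ (d < 0 ↔ a < 0) := by
  subst hd
  exact ⟨mul_pos_iff_of_pos_right hp,
    by rw [← neg_pos, ← neg_mul, mul_pos_iff_of_pos_right hp, neg_pos]⟩

section MomentumSummands

variable {α x β : ℝ}

theorem hasDerivAt_momentumDenominator :
    HasDerivAt (fun b => 2 * α * b * x + 2 - 2 * b ^ 2) (2 * α * x - 4 * β) β := by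
  refine ((((hasDerivAt_id β).const_mul (2 * α)).mul_const x).add_const 2 |>.fun_sub
      ((hasDerivAt_pow 2 β).const_mul 2)).congr_deriv ?_
  push_cast
  ring

theorem hasDerivAt_signalNumerator :
    HasDerivAt (fun b => 2 * α * b * x + b ^ 3 - b ^ 2 - b + 1)
      (2 * α * x + 3 * β ^ 2 - 2 * β - 1) β := by
  refine (((((hasDerivAt_id β).const_mul (2 * α)).mul_const x).fun_add
    (hasDerivAt_pow 3 β)).fun_sub (hasDerivAt_pow 2 β) |>.fun_sub
    (hasDerivAt_id β)).add_const 1 |>.congr_deriv ?_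
  push_cast
  ring

theorem hasDerivAt_noiseSummand (h : 2 * α * β * x + 2 - 2 * β ^ 2 ≠ 0) :
    HasDerivAt (fun b => α * (b + 1) / (2 * α * b * x + 2 - 2 * b ^ 2))
      ((α * (2 * α * β * x + 2 - 2 * β ^ 2) - α * (β + 1) * (2 * α * x - 4 * β)) /
        (2 * α * β * x + 2 - 2 * β ^ 2) ^ 2) β :=
  ((((hasDerivAt_id β).add_const 1).const_mul α).div hasDerivAt_momentumDenominator h).congr_deriv
    (by simp)

theorem hasDerivAt_signalSummand (h : α * (2 * α * β * x + 2 - 2 * β ^ 2) ≠ 0) :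
    HasDerivAt
      (fun b => (2 * α * b * x + b ^ 3 - b ^ 2 - b + 1) / (α * (2 * α * b * x + 2 - 2 * b ^ 2)))
      (((2 * α * x + 3 * β ^ 2 - 2 * β - 1) * (α * (2 * α * β * x + 2 - 2 * β ^ 2)) -
          (2 * α * β * x + β ^ 3 - β ^ 2 - β + 1) * (α * (2 * α * x - 4 * β))) /
        (α * (2 * α * β * x + 2 - 2 * β ^ 2)) ^ 2) β :=
  hasDerivAt_signalNumerator.div (hasDerivAt_momentumDenominator.const_mul α) h

end MomentumSummands

theorem hasDerivAt_tsum_noise (α : ℝ) {lam : ℕ → ℝ} (hlam : Summable lam) :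
    HasDerivAt (fun β => ∑' k, α * lam k * (β + 1) / (2 * α * β * lam k + 2 - 2 * β ^ 2))
      (α / 2 * ∑' k, lam k - α ^ 2 / 2 * ∑' k, lam k ^ 2) 0 := by
  have hD : Continuous fun p : ℝ × ℝ => 2 * α * p.1 * p.2 + 2 - 2 * p.1 ^ 2 := by fun_prop
  have hlam2 : Summable fun k => lam k ^ 2 := by simpa only [sq] using hlam.mul_of_summable hlam
  convert hasDerivAt_tsum_mul_apply_of_isCompact
    (φ := fun β x => α * (β + 1) / (2 * α * β * x + 2 - 2 * β ^ 2))
    (φ' := fun β x => (α * (2 * α * β * x + 2 - 2 * β ^ 2) - α * (β + 1) * (2 * α * x - 4 * β)) /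
        (2 * α * β * x + 2 - 2 * β ^ 2) ^ 2) hlam hlam.tendsto_atTop_zero.isCompact_insert_range
    (fun k => mem_insert_of_mem _ (mem_range_self k)) (isOpen_ne_fun hD continuous_const) ?_
    (fun p hp => hasDerivAt_noiseSummand hp) ?_ ?_ using 1
  · exact funext fun β => tsum_congr fun k => by ring
  · rw [← tsum_mul_left, ← tsum_mul_left, ← (hlam.mul_left _).tsum_sub (hlam2.mul_left _)]
    exact tsum_congr fun k => by ring
  · rintro ⟨β, y⟩ ⟨rfl : β = 0, -⟩
    norm_num
  · exact ContinuousOn.div (by fun_prop) (by fun_prop) fun p hp => pow_ne_zero 2 hp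
  · exact ContinuousOn.div (by fun_prop) (by fun_prop) (by norm_num)

theorem hasDerivAt_tsum_signal {α : ℝ} (hα : α ≠ 0) {lam c : ℕ → ℝ} (hlam : Summable lam)
    (hc : Summable c) :
    HasDerivAt (fun β => ∑' k, c k * (2 * α * β * lam k + β ^ 3 - β ^ 2 - β + 1) /
        (α * (2 * α * β * lam k + 2 - 2 * β ^ 2)))
      (1 / 2 * ∑' k, lam k * c k - 1 / (2 * α) * ∑' k, c k) 0 := by
  have hD : Continuous fun p : ℝ × ℝ => α * (2 * α * p.1 * p.2 + 2 - 2 * p.1 ^ 2) := by fun_prop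
  convert hasDerivAt_tsum_mul_apply_of_isCompact
    (φ := fun β x => (2 * α * β * x + β ^ 3 - β ^ 2 - β + 1) /
      (α * (2 * α * β * x + 2 - 2 * β ^ 2)))
    (φ' := fun β x =>
      ((2 * α * x + 3 * β ^ 2 - 2 * β - 1) * (α * (2 * α * β * x + 2 - 2 * β ^ 2)) -
          (2 * α * β * x + β ^ 3 - β ^ 2 - β + 1) * (α * (2 * α * x - 4 * β))) /
        (α * (2 * α * β * x + 2 - 2 * β ^ 2)) ^ 2) hc hlam.tendsto_atTop_zero.isCompact_insert_range
    (fun k => mem_insert_of_mem _ (mem_range_self k)) (isOpen_ne_fun hD continuous_const) ?_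
    (fun p hp => hasDerivAt_signalSummand hp) ?_ ?_ using 1
  · exact funext fun β => tsum_congr fun k => by ring
  · rw [← tsum_mul_left, ← tsum_mul_left,
      ← ((hlam.mul_of_summable hc).mul_left _).tsum_sub (hc.mul_left _)]
    refine tsum_congr fun k => ?_
    field_simp
    ring
  · rintro ⟨β, y⟩ ⟨rfl : β = 0, -⟩
    simpa using hα
  · exact ContinuousOn.div (by fun_prop) (by fun_prop) fun p hp => pow_ne_zero 2 hp
  · exact ContinuousOn.div (by fun_prop) (by fun_prop) (by simpa using hα)

theorem noise_momentum_sign_general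
    (ν : ℝ) (hν : 1 < ν)
    (lam c : ℕ → ℝ)
    (hlamsum : Summable lam) (hcsum : Summable c)
    (hlampos : 0 < ∑' k, lam k)
    (αstar : ℝ) (hαstar : αstar = 2 * (ν - 1) / ((3 * ν - 1) * ∑' k, lam k))
    (U1 V1 : ℝ → ℝ)
    (hU1 : ∀ β, U1 β = ∑' k, αstar * lam k * (β + 1) /
        (2 * αstar * β * lam k + 2 - 2 * β ^ 2))
    (hV1 : ∀ β, V1 β = ∑' k, c k * (2 * αstar * β * lam k + β ^ 3 - β ^ 2 - β + 1) /
        (αstar * (2 * αstar * β * lam k + 2 - 2 * β ^ 2)))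
    (Ξ : ℝ)
    (hΞ : Ξ = ν * (∑' k, lam k) * (∑' k, lam k * c k)
        - (ν - 1) * (∑' k, lam k ^ 2) * (∑' k, c k)) :
    ∃ d : ℝ,
      HasDerivAt (fun β : ℝ => (1 - β) ^ (-(1 / ν)) * V1 β / (1 - U1 β) ^ 2) d 0 ∧
      (0 < d ↔ 0 < Ξ) ∧ (d < 0 ↔ Ξ < 0) := by
  have hν1 : 0 < ν - 1 := sub_pos.2 hν
  have hν3 : 0 < 3 * ν - 1 := by linarith
  have hα : 0 < αstar := by rw [hαstar]; positivity
  have hαS : αstar * ((3 * ν - 1) * ∑' k, lam k) = 2 * (ν - 1) := by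
    rw [hαstar]; exact div_mul_cancel₀ _ (by positivity)
  have hU : HasDerivAt U1 _ 0 := funext hU1 ▸ hasDerivAt_tsum_noise αstar hlamsum
  have hV : HasDerivAt V1 _ 0 := funext hV1 ▸ hasDerivAt_tsum_signal hα.ne' hlamsum hcsum
  have h1U0 : 1 - U1 0 = 2 * ν / (3 * ν - 1) := by
    simp only [hU1, eq_div_iff hν3.ne']
    simp [tsum_div_const, tsum_mul_left]
    linear_combination (-1 / 2 : ℝ) * hαS
  have hV0 : V1 0 = (∑' k, c k) / (αstar * 2) := by simp [hV1, tsum_div_const]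
  have hU0 : U1 0 ≠ 1 := by
    rw [← sub_ne_zero, ← neg_sub, neg_ne_zero, h1U0]; positivity
  refine ⟨_, hasDerivAt_one_sub_rpow_mul_div_one_sub_sq hU hV hU0,
    sign_eq_of_eq_mul_pos (p := (3 * ν - 1) ^ 2 / (8 * ν ^ 3 * ∑' k, lam k)) (by positivity) ?_⟩
  rw [h1U0, hV0, hΞ, hαstar]
  field_simp
  ring

/-- Sign of the momentum derivative of the approximate loss in the
noise-dominated phase (with `τ = γ = 1`): at the `β = 0` optimal learning rate
`α* = 2(ν−1)/((3ν−1)·Tr H)`, the function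
`F(β) = (1−β)^{−1/ν}·Ṽ₁(β)/(1 − Ũ₁(β))²` has a derivative `d` at `β = 0`, and the
sign of `d` equals the sign of `Ξ = ν·TrH·Tr(HC₀) − (ν−1)·TrH²·TrC₀`. -/
theorem noise_momentum_sign
    (ν : ℝ) (hν : 1 < ν)
    (lam c : ℕ → ℝ) (hlam : ∀ k, 0 ≤ lam k) (hc : ∀ k, 0 ≤ c k)
    (hlamsum : Summable lam) (hcsum : Summable c)
    (hlampos : 0 < ∑' k, lam k) (hcpos : 0 < ∑' k, c k)
    (αstar : ℝ) (hαstar : αstar = 2 * (ν - 1) / ((3 * ν - 1) * ∑' k, lam k))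
    (U1 V1 : ℝ → ℝ)
    (hU1 : ∀ β, U1 β = ∑' k, αstar * lam k * (β + 1) /
        (2 * αstar * β * lam k + 2 - 2 * β ^ 2))
    (hV1 : ∀ β, V1 β = ∑' k, c k * (2 * αstar * β * lam k + β ^ 3 - β ^ 2 - β + 1) /
        (αstar * (2 * αstar * β * lam k + 2 - 2 * β ^ 2)))
    (Ξ : ℝ)
    (hΞ : Ξ = ν * (∑' k, lam k) * (∑' k, lam k * c k)
        - (ν - 1) * (∑' k, lam k ^ 2) * (∑' k, c k)) :
    ∃ d : ℝ,
      HasDerivAt (fun β : ℝ => (1 - β) ^ (-(1 / ν)) * V1 β / (1 - U1 β) ^ 2) d 0 ∧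
      (0 < d ↔ 0 < Ξ) ∧ (d < 0 ↔ Ξ < 0) :=
  noise_momentum_sign_general ν hν lam c hlamsum hcsum hlampos αstar hαstar U1 V1 hU1 hV1 Ξ hΞ
end
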